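/- arXiv:2605.20597 — 5 statements merged into one kernel-verified Lean document; each statement's English description precedes it below -/
import Mathlib

section
/- Let r, δ ∈ (0,∞) and x, y ∈ ℝ^n with |x−y| < (1+δ)r. Then there exists z ∈ ℝ^n such that B(z, r*) ⊆ B(x,r) ∩ B(y, δr), where r* := ((1+δ)r − max{|x−y|, |1−δ|r})/2. -/
/-- If `r, δ > 0` and `|x − y| < (1 + δ) r`, then there is `z` with
`B(z, r*) ⊆ B(x, r) ∩ B(y, δ r)`, where
`r* = ((1 + δ) r − max {|x − y|, |1 − δ| r}) / 2`. -/
theorem stmt3 (n : ℕ) (r δ : ℝ) (hr : 0 < r) (hδ : 0 < δ)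
    (x y : EuclideanSpace ℝ (Fin n)) (h : dist x y < (1 + δ) * r) :
    ∃ z : EuclideanSpace ℝ (Fin n),
      Metric.ball z (((1 + δ) * r - max (dist x y) (|1 - δ| * r)) / 2)
        ⊆ Metric.ball x r ∩ Metric.ball y (δ * r) := by
  set D := dist x y with hD
  set M := max D (|1 - δ| * r) with hM
  set R := ((1 + δ) * r - M) / 2 with hR
  have hD0 : 0 ≤ D := dist_nonneg
  have habs1 : (1 - δ) * r ≤ |1 - δ| * r :=
    mul_le_mul_of_nonneg_right (le_abs_self _) hr.le
  have habs2 : (δ - 1) * r ≤ |1 - δ| * r := by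
    have := neg_abs_le (1 - δ)
    nlinarith
  have hMD : D ≤ M := le_max_left _ _
  have hMa : |1 - δ| * r ≤ M := le_max_right _ _
  have hRr : R ≤ r := by rw [hR]; nlinarith
  have hRδr : R ≤ δ * r := by rw [hR]; nlinarith
  set a := min (r - R) D with ha
  have ha0 : 0 ≤ a := le_min (by linarith) hD0
  have haD : a ≤ D := min_le_right _ _
  have haR : a ≤ r - R := min_le_left _ _
  have hkey : D - a ≤ δ * r - R := by
    rcases min_cases (r - R) D with ⟨h1, h2⟩ | ⟨h1, h2⟩
    · rw [ha, h1, hR]; linarith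
    · rw [ha, h1]; linarith
  set c := a / D with hc
  refine ⟨x + c • (y - x), fun w hw => ?_⟩
  have hwz : dist w (x + c • (y - x)) < R := hw
  have hzx : dist (x + c • (y - x)) x = a := by
    rw [dist_eq_norm, add_sub_cancel_left, norm_smul, Real.norm_eq_abs,
      ← dist_eq_norm, dist_comm y x, ← hD]
    rcases eq_or_lt_of_le hD0 with hD0' | hD0'
    · simp [hc, ← hD0']
      have : a = 0 := le_antisymm (haD.trans hD0'.symm.le) ha0
      simp [this]
    · rw [abs_of_nonneg (div_nonneg ha0 hD0), div_mul_cancel₀ _ hD0'.ne']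
  have hzy : dist (x + c • (y - x)) y = D - a := by
    have : x + c • (y - x) - y = (c - 1) • (y - x) := by
      rw [sub_smul, one_smul]; abel
    rw [dist_eq_norm, this, norm_smul, Real.norm_eq_abs,
      ← dist_eq_norm, dist_comm y x, ← hD]
    rcases eq_or_lt_of_le hD0 with hD0' | hD0'
    · have : a = 0 := le_antisymm (haD.trans hD0'.symm.le) ha0
      simp [← hD0', this]
    · have hc1 : c ≤ 1 := by
        rw [hc, div_le_one hD0']; exact haD
      rw [abs_of_nonpos (by linarith)]
      show -(a / D - 1) * D = D - a
      field_simp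
      ring
  constructor
  · rw [Metric.mem_ball]
    calc dist w x ≤ dist w (x + c • (y - x)) + dist (x + c • (y - x)) x :=
          dist_triangle _ _ _
      _ < R + a := by rw [hzx]; linarith
      _ ≤ r := by linarith
  · rw [Metric.mem_ball]
    calc dist w y ≤ dist w (x + c • (y - x)) + dist (x + c • (y - x)) y :=
          dist_triangle _ _ _
      _ < R + (D - a) := by rw [hzy]; linarith
      _ ≤ δ * r := by linarith
end

section
/- For every t ∈ {0, 1/3}^n, define the dyadic grid 𝒬^t := { 2^k([0,1)^n + m + (−1)^k t) : k ∈ ℤ, m ∈ ℤ^n }. Then for every cube Q in ℝ^n (with sides parallel to the axes), there exist t ∈ {0,1/3}^n and Q_t ∈ 𝒬^t such that Q ⊆ Q_t and l(Q_t) ≤ 6 l(Q). -/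
/-- "1/3-trick". For every axis-parallel cube
`Q = {x | ∀ i, a i ≤ x i < a i + l}` in `ℝ^n`, there exist `t ∈ {0, 1/3}^n` and a
cube `Q_t` of the dyadic grid `𝒬^t = {2^k([0,1)^n + m + (−1)^k t)}` such that
`Q ⊆ Q_t` and `l(Q_t) ≤ 6 l(Q)`. -/
theorem stmt5 (n : ℕ) (a : Fin n → ℝ) (l : ℝ) (hl : 0 < l) :
    ∃ t : Fin n → ℝ, (∀ i, t i = 0 ∨ t i = 1 / 3) ∧
      ∃ (k : ℤ) (mv : Fin n → ℤ),
        ({x : Fin n → ℝ | ∀ i, a i ≤ x i ∧ x i < a i + l} ⊆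
          {x : Fin n → ℝ | ∀ i,
            (2 : ℝ) ^ k * ((mv i : ℝ) + (-1 : ℝ) ^ k * t i) ≤ x i ∧
            x i < (2 : ℝ) ^ k * ((mv i : ℝ) + (-1 : ℝ) ^ k * t i) + (2 : ℝ) ^ k}) ∧
        (2 : ℝ) ^ k ≤ 6 * l := by
  obtain ⟨kk, h1, h2⟩ := exists_mem_Ioc_zpow (by linarith : (0:ℝ) < 3 * l)
    (by norm_num : (1:ℝ) < 2)
  set k : ℤ := kk + 1 with hk
  set h : ℝ := (2:ℝ) ^ k with hh
  have hpos : (0:ℝ) < h := zpow_pos (by norm_num) k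
  have hkk : (2:ℝ) ^ k = 2 * (2:ℝ) ^ kk := by
    rw [hk, zpow_add₀ (by norm_num : (2:ℝ) ≠ 0)]; ring
  have h3l : 3 * l ≤ h := by rw [hh, hk]; exact h2
  have h6l : h ≤ 6 * l := by rw [hh, hkk]; linarith
  refine ⟨fun i => if a i + l ≤ ((⌊a i / h⌋ : ℝ) + 1) * h then 0 else 1/3,
    fun i => by dsimp only; split <;> norm_num, k,
    fun i => if a i + l ≤ ((⌊a i / h⌋ : ℝ) + 1) * h then ⌊a i / h⌋
      else if Even k then ⌊a i / h⌋ else ⌊a i / h⌋ + 1, ?_, h6l⟩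
  intro x hx
  intro i
  obtain ⟨hx1, hx2⟩ := hx i
  set m0 : ℤ := ⌊a i / h⌋ with hm0
  have hf1 : (m0 : ℝ) * h ≤ a i := by
    have := Int.floor_le (a i / h)
    calc (m0:ℝ) * h ≤ (a i / h) * h := by nlinarith
    _ = a i := by field_simp
  have hf2 : a i < ((m0 : ℝ) + 1) * h := by
    have := Int.lt_floor_add_one (a i / h)
    have : a i / h < (m0:ℝ) + 1 := this
    calc a i = (a i / h) * h := by field_simp
    _ < ((m0:ℝ)+1) * h := by nlinarith
  dsimp only
  by_cases hc : a i + l ≤ ((m0 : ℝ) + 1) * h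
  · rw [if_pos hc, if_pos hc]
    constructor
    · nlinarith
    · nlinarith
  · rw [if_neg hc, if_neg hc]
    have ha : ((m0:ℝ)+1) * h < a i + l := lt_of_not_ge hc
    rcases Int.even_or_odd k with he | ho
    · rw [if_pos he, he.neg_one_zpow]
      constructor
      · nlinarith
      · nlinarith
    · rw [if_neg ((Int.not_even_iff_odd.mpr ho)), ho.neg_one_zpow]
      push_cast
      constructor
      · nlinarith
      · nlinarith
end

section
/- Let u ∈ (0,∞) and let F, Q, and the positive definite self-adjoint matrix M_Q^(u) be such that |M_Q^(u) z| ≍ ( ⨍_Q ρ_{F(x)}(z)^u dx )^{1/u} for all z ∈ ℂ^m, with F(x) absorbing bounded symmetric closed convex for a.e. x. Then for every positive definite self-adjoint m×m matrix M, the operator norm ‖M_Q^(u) M‖ is comparable (with constants independent of F, Q, M) to ( ⨍_Q |M F(x)|^u dx )^{1/u}, where |K| := sup{|v| : v ∈ K} and MK := {Mv : v ∈ K}. -/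
open MeasureTheory Set
open scoped ComplexOrder ENNReal Pointwise

/-- For a set `K ⊆ ℂ^m` and a vector `v`, `ρ_K(v) := sup_{w ∈ K} |⟨v, w⟩|`. -/
noncomputable def convexBodyGauge {m : ℕ} (K : Set (EuclideanSpace ℂ (Fin m)))
    (v : EuclideanSpace ℂ (Fin m)) : ℝ :=
  sSup ((fun w => ‖(inner ℂ v w : ℂ)‖) '' K)

/-- For a matrix `M` and a set `K ⊆ ℂ^m`, `|M K| := sup {|M v| : v ∈ K}`. -/
noncomputable def matrixSetNorm {m : ℕ} (M : Matrix (Fin m) (Fin m) ℂ)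
    (K : Set (EuclideanSpace ℂ (Fin m))) : ℝ :=
  sSup ((fun v => ‖(Matrix.toEuclideanCLM (𝕜 := ℂ) M) v‖) '' K)

/-- The axis-parallel (half-open) cube in `ℝ^n` with corner `a` and edge length `l`. -/
def cornerCube (n : ℕ) (a : Fin n → ℝ) (l : ℝ) : Set (Fin n → ℝ) :=
  {x | ∀ i, a i ≤ x i ∧ x i < a i + l}

section Stmt8Aux

variable {m : ℕ}
local notation "E" => EuclideanSpace ℂ (Fin m)
local notation "Mc" M => Matrix.toEuclideanCLM (𝕜 := ℂ) M


lemma coord_le_norm (y : E) (j : Fin m) : ‖y j‖ ≤ ‖y‖ := by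
  have h : (y j : ℂ) = inner ℂ (EuclideanSpace.single j (1:ℂ)) y := by
    rw [EuclideanSpace.inner_single_left]; simp
  calc ‖y j‖ = ‖(inner ℂ (EuclideanSpace.single j (1:ℂ)) y : ℂ)‖ := by rw [← h]
    _ ≤ ‖EuclideanSpace.single j (1:ℂ)‖ * ‖y‖ := norm_inner_le_norm _ _
    _ = ‖y‖ := by rw [EuclideanSpace.norm_single]; simp

lemma norm_le_sum_coord (y : E) : ‖y‖ ≤ ∑ j, ‖y j‖ := by
  rw [EuclideanSpace.norm_eq]
  have h1 : ∑ i, ‖y i‖ ^ 2 ≤ (∑ i, ‖y i‖) ^ 2 :=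
    Finset.sum_sq_le_sq_sum_of_nonneg (fun i _ => norm_nonneg _)
  calc √(∑ i, ‖y i‖ ^ 2) ≤ √((∑ i, ‖y i‖) ^ 2) := Real.sqrt_le_sqrt h1
    _ = ∑ i, ‖y i‖ := Real.sqrt_sq (Finset.sum_nonneg fun i _ => norm_nonneg _)

lemma opNorm_le_sum (T : E →L[ℂ] E) : ‖T‖ ≤ ∑ j, ‖T (EuclideanSpace.single j (1:ℂ))‖ := by
  refine T.opNorm_le_bound (Finset.sum_nonneg fun j _ => norm_nonneg _) (fun y => ?_)
  have hy : ∑ j, (y j) • EuclideanSpace.single j (1:ℂ) = y := by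
    have := (EuclideanSpace.basisFun (Fin m) ℂ).sum_repr y
    simpa [EuclideanSpace.basisFun_apply, EuclideanSpace.basisFun_repr] using this
  calc ‖T y‖ = ‖∑ j, (y j) • T (EuclideanSpace.single j (1:ℂ))‖ := by
        conv_lhs => rw [← hy]
        simp [map_sum]
    _ ≤ ∑ j, ‖(y j) • T (EuclideanSpace.single j (1:ℂ))‖ := norm_sum_le _ _
    _ ≤ ∑ j, ‖y‖ * ‖T (EuclideanSpace.single j (1:ℂ))‖ := by
        refine Finset.sum_le_sum fun j _ => ?_
        rw [norm_smul]
        exact mul_le_mul_of_nonneg_right (coord_le_norm y j) (norm_nonneg _)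
    _ = (∑ j, ‖T (EuclideanSpace.single j (1:ℂ))‖) * ‖y‖ := by
        rw [Finset.sum_mul]; simp [mul_comm]


lemma stmt8_posdef_clm_ne_zero {M : Matrix (Fin m) (Fin m) ℂ} (hM : M.PosDef) {z : E}
    (hz : z ≠ 0) : (Matrix.toEuclideanCLM (𝕜 := ℂ) M) z ≠ 0 := by
  intro h
  set x : Fin m → ℂ := (WithLp.equiv 2 (Fin m → ℂ)) z with hx
  have hxne : x ≠ 0 := by
    intro hx0
    apply hz
    have := congrArg (WithLp.equiv 2 (Fin m → ℂ)).symm hx0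
    simpa [hx] using this
  have hmv : M.mulVec x = 0 := by
    have := Matrix.ofLp_toEuclideanCLM (𝕜 := ℂ) M z
    rw [h] at this
    simpa [hx] using this.symm
  have := hM.dotProduct_mulVec_pos hxne
  rw [hmv] at this
  simp at this


lemma stmt8_dense_pairing {d : ℕ → E} (hd : DenseRange d) (y : E) {ε : ℝ} (hε : 0 < ε) :
    ∃ k : ℕ, ‖d k‖ < 1 ∧ ‖y‖ - ε ≤ ‖(inner ℂ (d k) y : ℂ)‖ := by
  rcases eq_or_ne y 0 with rfl | hy
  · obtain ⟨k, hk⟩ := (Metric.denseRange_iff.mp hd) 0 1 one_pos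
    refine ⟨k, ?_, by simp; linarith⟩
    rw [dist_comm] at hk
    simpa [dist_zero_right] using hk
  · have hyn : (0:ℝ) < ‖y‖ := norm_pos_iff.mpr hy
    set s : ℝ := min (ε / (2 * ‖y‖)) (1/2) with hs
    have hs0 : 0 < s := lt_min (by positivity) (by norm_num)
    have hs1 : s ≤ 1/2 := min_le_right _ _
    have hs2 : s ≤ ε / (2 * ‖y‖) := min_le_left _ _
    set t : ℝ := 1 - s with ht
    have ht0 : 0 < t := by simp only [ht]; linarith
    have ht1 : t < 1 := by simp only [ht]; linarith
    set w₀ : E := (t / ‖y‖) • y with hw₀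
    have hw₀n : ‖w₀‖ = t := by
      rw [hw₀, norm_smul, Real.norm_eq_abs, abs_of_pos (by positivity)]
      field_simp
    set δ : ℝ := min ((1 - t)/2) (ε / (2 * (‖y‖ + 1))) with hδ
    have hδ0 : 0 < δ := lt_min (by linarith) (by positivity)
    have hδ1 : δ ≤ (1 - t)/2 := min_le_left _ _
    have hδ2 : δ ≤ ε / (2 * (‖y‖ + 1)) := min_le_right _ _
    obtain ⟨k, hk⟩ := (Metric.denseRange_iff.mp hd) w₀ δ hδ0
    rw [dist_comm, dist_eq_norm] at hk
    refine ⟨k, ?_, ?_⟩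
    · have h1 : ‖d k‖ - ‖w₀‖ ≤ ‖d k - w₀‖ := norm_sub_norm_le _ _
      rw [hw₀n] at h1
      linarith
    · have hw₀y : ‖(inner ℂ w₀ y : ℂ)‖ = t * ‖y‖ := by
        rw [hw₀]
        have hsm : ((t / ‖y‖) • y) = (((t / ‖y‖ : ℝ) : ℂ)) • y := by
          rw [Complex.coe_smul]
        rw [hsm, inner_smul_left, inner_self_eq_norm_sq_to_K]
        simp only [Complex.conj_ofReal]
        rw [norm_mul, Complex.norm_real, Real.norm_eq_abs, abs_of_pos (by positivity : (0:ℝ) < t / ‖y‖)]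
        rw [norm_pow, RCLike.norm_ofReal, abs_of_pos hyn]
        field_simp
      have h2 : ‖(inner ℂ w₀ y : ℂ)‖ - ‖(inner ℂ (d k) y : ℂ)‖ ≤ ‖(inner ℂ (w₀ - d k) y : ℂ)‖ := by
        have := norm_sub_norm_le (inner ℂ w₀ y : ℂ) (inner ℂ (d k) y : ℂ)
        have heq : (inner ℂ w₀ y : ℂ) - inner ℂ (d k) y = inner ℂ (w₀ - d k) y := (inner_sub_left _ _ _).symm
        rw [← heq] at *
        exact this
      have h3 : ‖(inner ℂ (w₀ - d k) y : ℂ)‖ ≤ δ * ‖y‖ := by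
        calc ‖(inner ℂ (w₀ - d k) y : ℂ)‖ ≤ ‖w₀ - d k‖ * ‖y‖ := norm_inner_le_norm _ _
          _ ≤ δ * ‖y‖ := by
            have : ‖w₀ - d k‖ = ‖d k - w₀‖ := norm_sub_rev _ _
            rw [this]
            exact mul_le_mul_of_nonneg_right hk.le (norm_nonneg _)
      have h4 : s * ‖y‖ ≤ ε / 2 := by
        calc s * ‖y‖ ≤ (ε / (2 * ‖y‖)) * ‖y‖ := mul_le_mul_of_nonneg_right hs2 hyn.le
          _ = ε / 2 := by field_simp
      have h5 : δ * ‖y‖ ≤ ε / 2 := by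
        calc δ * ‖y‖ ≤ (ε / (2 * (‖y‖ + 1))) * ‖y‖ := mul_le_mul_of_nonneg_right hδ2 hyn.le
          _ ≤ ε / 2 := by
            rw [div_mul_eq_mul_div, div_le_div_iff₀ (by positivity) (by norm_num)]
            nlinarith
      have : t * ‖y‖ = ‖y‖ - s * ‖y‖ := by rw [ht]; ring
      linarith [h2, h3, hw₀y ▸ (by linarith : t * ‖y‖ - δ * ‖y‖ ≥ ‖y‖ - ε)]


lemma stmt8_gauge_nonneg (K : Set E) (z : E) : 0 ≤ convexBodyGauge K z :=
  Real.sSup_nonneg (by rintro x ⟨w, _, rfl⟩; exact norm_nonneg _)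

lemma stmt8_msn_nonneg (M : Matrix (Fin m) (Fin m) ℂ) (K : Set E) : 0 ≤ matrixSetNorm M K :=
  Real.sSup_nonneg (by rintro x ⟨w, _, rfl⟩; exact norm_nonneg _)

lemma stmt8_gauge_zero (K : Set E) : convexBodyGauge K 0 = 0 := by
  refine le_antisymm (Real.sSup_le ?_ le_rfl) (stmt8_gauge_nonneg K 0)
  rintro x ⟨w, _, rfl⟩; simp

lemma stmt8_herm_inner {M : Matrix (Fin m) (Fin m) ℂ} (hM : M.IsHermitian) (z w : E) :
    (inner ℂ ((Mc M) z) w : ℂ) = inner ℂ z ((Mc M) w) := by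
  have hsym := Matrix.isHermitian_iff_isSymmetric.mp hM
  have hc : ∀ v : E, Matrix.toEuclideanLin M v = (Mc M) v := by
    intro v; rw [← Matrix.coe_toEuclideanCLM_eq_toEuclideanLin]; rfl
  rw [← hc z, ← hc w]; exact hsym z w

lemma stmt8_bddAbove_gauge_image {K : Set E} {R : ℝ} (hK : ∀ v ∈ K, ‖v‖ ≤ R) (z : E) :
    BddAbove ((fun w => ‖(inner ℂ z w : ℂ)‖) '' K) := by
  refine ⟨‖z‖ * R, ?_⟩
  rintro x ⟨w, hw, rfl⟩
  calc ‖(inner ℂ z w : ℂ)‖ ≤ ‖z‖ * ‖w‖ := norm_inner_le_norm _ _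
    _ ≤ ‖z‖ * R := mul_le_mul_of_nonneg_left (hK w hw) (norm_nonneg _)

lemma stmt8_bddAbove_msn_image {M : Matrix (Fin m) (Fin m) ℂ} {K : Set E} {R : ℝ}
    (hK : ∀ v ∈ K, ‖v‖ ≤ R) :
    BddAbove ((fun v => ‖(Mc M) v‖) '' K) := by
  refine ⟨‖(Mc M)‖ * R, ?_⟩
  rintro x ⟨w, hw, rfl⟩
  calc ‖(Mc M) w‖ ≤ ‖(Mc M)‖ * ‖w‖ := (Mc M).le_opNorm w
    _ ≤ ‖(Mc M)‖ * R := mul_le_mul_of_nonneg_left (hK w hw) (norm_nonneg _)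

/-- gauge of `M z` is at most `‖z‖ * |M K|`. -/
lemma stmt8_gauge_le_msn {M : Matrix (Fin m) (Fin m) ℂ} (hM : M.IsHermitian) {K : Set E}
    {R : ℝ} (hK : ∀ v ∈ K, ‖v‖ ≤ R) {z : E} (hz : ‖z‖ ≤ 1) :
    convexBodyGauge K ((Mc M) z) ≤ matrixSetNorm M K := by
  refine Real.sSup_le ?_ (stmt8_msn_nonneg M K)
  rintro x ⟨w, hw, rfl⟩
  calc ‖(inner ℂ ((Mc M) z) w : ℂ)‖ = ‖(inner ℂ z ((Mc M) w) : ℂ)‖ := by rw [stmt8_herm_inner hM]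
    _ ≤ ‖z‖ * ‖(Mc M) w‖ := norm_inner_le_norm _ _
    _ ≤ 1 * ‖(Mc M) w‖ := mul_le_mul_of_nonneg_right hz (norm_nonneg _)
    _ = ‖(Mc M) w‖ := one_mul _
    _ ≤ matrixSetNorm M K := le_csSup (stmt8_bddAbove_msn_image hK) ⟨w, hw, rfl⟩

lemma stmt8_msn_le_sum {M : Matrix (Fin m) (Fin m) ℂ} (hM : M.IsHermitian) {K : Set E}
    {R : ℝ} (hK : ∀ v ∈ K, ‖v‖ ≤ R) :
    matrixSetNorm M K ≤ ∑ j, convexBodyGauge K ((Mc M) (EuclideanSpace.single j (1:ℂ))) := by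
  refine Real.sSup_le ?_ (Finset.sum_nonneg fun j _ => stmt8_gauge_nonneg _ _)
  rintro x ⟨w, hw, rfl⟩
  have key : ∀ j : Fin m, ‖((Mc M) w) j‖
      ≤ convexBodyGauge K ((Mc M) (EuclideanSpace.single j (1:ℂ))) := by
    intro j
    have h1 : (((Mc M) w) j : ℂ) = inner ℂ (EuclideanSpace.single j (1:ℂ)) ((Mc M) w) := by
      rw [EuclideanSpace.inner_single_left]; simp
    have h2 : ‖((Mc M) w) j‖ = ‖(inner ℂ ((Mc M) (EuclideanSpace.single j (1:ℂ))) w : ℂ)‖ := by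
      rw [stmt8_herm_inner hM, ← h1]
    rw [h2]
    exact le_csSup (stmt8_bddAbove_gauge_image hK _) ⟨w, hw, rfl⟩
  calc ‖(Mc M) w‖ ≤ ∑ j, ‖((Mc M) w) j‖ := by
        have h := EuclideanSpace.norm_eq ((Mc M) w)
        rw [h]
        calc √(∑ i, ‖((Mc M) w) i‖ ^ 2) ≤ √((∑ i, ‖((Mc M) w) i‖) ^ 2) :=
              Real.sqrt_le_sqrt (Finset.sum_sq_le_sq_sum_of_nonneg (fun i _ => norm_nonneg _))
          _ = ∑ i, ‖((Mc M) w) i‖ := Real.sqrt_sq (Finset.sum_nonneg fun i _ => norm_nonneg _)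
    _ ≤ ∑ j, convexBodyGauge K ((Mc M) (EuclideanSpace.single j (1:ℂ))) :=
        Finset.sum_le_sum fun j _ => key j
/-- `|M K|` as a countable supremum over a dense sequence inside the unit ball. -/
lemma stmt8_msn_eq_iSup {M : Matrix (Fin m) (Fin m) ℂ} (hM : M.IsHermitian)
    {d : ℕ → E} (hd : DenseRange d) {K : Set E} (hne : K.Nonempty)
    {R : ℝ} (hK : ∀ v ∈ K, ‖v‖ ≤ R) :
    matrixSetNorm M K = ⨆ k : {k : ℕ // ‖d k‖ < 1}, convexBodyGauge K ((Mc M) (d k.1)) := by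
  have hR : 0 ≤ R := by
    obtain ⟨v, hv⟩ := hne
    exact (norm_nonneg v).trans (hK v hv)
  obtain ⟨k₀, hk₀⟩ := (Metric.denseRange_iff.mp hd) 0 1 one_pos
  rw [dist_comm, dist_zero_right] at hk₀
  haveI : Nonempty {k : ℕ // ‖d k‖ < 1} := ⟨⟨k₀, hk₀⟩⟩
  have hbdd : BddAbove (range fun k : {k : ℕ // ‖d k‖ < 1} =>
      convexBodyGauge K ((Mc M) (d k.1))) := by
    refine ⟨matrixSetNorm M K, ?_⟩
    rintro x ⟨k, rfl⟩
    exact stmt8_gauge_le_msn hM hK k.2.le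
  refine le_antisymm ?_ (ciSup_le fun k => stmt8_gauge_le_msn hM hK k.2.le)
  have hsup0 : 0 ≤ ⨆ k : {k : ℕ // ‖d k‖ < 1}, convexBodyGauge K ((Mc M) (d k.1)) := by
    refine le_trans (stmt8_gauge_nonneg K ((Mc M) (d k₀))) ?_
    exact le_ciSup hbdd (⟨k₀, hk₀⟩ : {k : ℕ // ‖d k‖ < 1})
  refine Real.sSup_le ?_ hsup0
  rintro x ⟨v, hv, rfl⟩
  refine le_of_forall_pos_le_add fun ε hε => ?_
  obtain ⟨k, hk1, hk2⟩ := stmt8_dense_pairing hd ((Mc M) v) hε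
  have h3 : ‖(inner ℂ (d k) ((Mc M) v) : ℂ)‖ = ‖(inner ℂ ((Mc M) (d k)) v : ℂ)‖ := by
    rw [stmt8_herm_inner hM]
  have h4 : ‖(inner ℂ ((Mc M) (d k)) v : ℂ)‖ ≤ convexBodyGauge K ((Mc M) (d k)) :=
    le_csSup (stmt8_bddAbove_gauge_image hK _) ⟨v, hv, rfl⟩
  have h5 : convexBodyGauge K ((Mc M) (d k))
      ≤ ⨆ k : {k : ℕ // ‖d k‖ < 1}, convexBodyGauge K ((Mc M) (d k.1)) :=
    le_ciSup hbdd (⟨k, hk1⟩ : {k : ℕ // ‖d k‖ < 1})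
  rw [h3] at hk2
  linarith

/-- `(∑ a j) ^ u ≤ m ^ u * ∑ (a j) ^ u` for nonnegative `a` and `u > 0`. -/
lemma stmt8_sum_rpow {u : ℝ} (hu : 0 < u) (a : Fin m → ℝ) (ha : ∀ j, 0 ≤ a j) :
    (∑ j, a j) ^ u ≤ (m : ℝ) ^ u * ∑ j, (a j) ^ u := by
  rcases Nat.eq_zero_or_pos m with hm | hm
  · subst hm
    simp [Real.zero_rpow hu.ne']
  · haveI : Nonempty (Fin m) := Fin.pos_iff_nonempty.mp hm
    obtain ⟨j₀, -, hj₀⟩ := Finset.exists_max_image Finset.univ a ⟨Classical.arbitrary (Fin m),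
      Finset.mem_univ _⟩
    have h1 : ∑ j, a j ≤ (m : ℝ) * a j₀ := by
      calc ∑ j, a j ≤ ∑ _j : Fin m, a j₀ := Finset.sum_le_sum fun j _ => hj₀ j (Finset.mem_univ j)
        _ = (m : ℝ) * a j₀ := by simp [mul_comm]
    have h2 : (∑ j, a j) ^ u ≤ ((m : ℝ) * a j₀) ^ u :=
      Real.rpow_le_rpow (Finset.sum_nonneg fun j _ => ha j) h1 hu.le
    have h3 : ((m : ℝ) * a j₀) ^ u = (m : ℝ) ^ u * (a j₀) ^ u :=
      Real.mul_rpow (Nat.cast_nonneg m) (ha j₀)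
    have h4 : (a j₀) ^ u ≤ ∑ j, (a j) ^ u :=
      Finset.single_le_sum (fun j _ => Real.rpow_nonneg (ha j) u) (Finset.mem_univ j₀)
    calc (∑ j, a j) ^ u ≤ (m : ℝ) ^ u * (a j₀) ^ u := by rw [← h3]; exact h2
      _ ≤ (m : ℝ) ^ u * ∑ j, (a j) ^ u :=
          mul_le_mul_of_nonneg_left h4 (Real.rpow_nonneg (Nat.cast_nonneg m) u)

end Stmt8Aux

set_option maxHeartbeats 1000000 in
/-- Let `u > 0` and suppose `M_Q` is a positive definite self-adjoint
matrix satisfying `|M_Q z| ≍ (⨍_Q ρ_{F(x)}(z)^u dx)^{1/u}` (with constants `c₁, C₁`)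
for a convex-body-valued `F` with a.e. absorbing bounded symmetric closed convex
values. Then, with constants independent of `F`, `Q` and `M`, for every positive
definite self-adjoint matrix `M` one has
`‖M_Q M‖ ≍ (⨍_Q |M F(x)|^u dx)^{1/u}`. -/
theorem stmt8 (m n : ℕ) (u : ℝ) (hu : 0 < u) (c₁ C₁ : ℝ) (hc₁ : 0 < c₁) (hC₁ : 0 < C₁) :
    ∃ c C : ℝ, 0 < c ∧ 0 < C ∧
      ∀ (a : Fin n → ℝ) (l : ℝ), 0 < l →
      ∀ F : (Fin n → ℝ) → Set (EuclideanSpace ℂ (Fin m)),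
        (∀ᵐ x ∂(volume.restrict (cornerCube n a l)),
          IsClosed (F x) ∧ Convex ℝ (F x) ∧
            (∀ c' : ℂ, ‖c'‖ = 1 → c' • F x = F x) ∧
            Bornology.IsBounded (F x) ∧ Absorbent ℂ (F x)) →
      ∀ MQ : Matrix (Fin m) (Fin m) ℂ, MQ.PosDef → MQ.IsHermitian →
        (∀ z : EuclideanSpace ℂ (Fin m),
          c₁ * (⨍ x in cornerCube n a l, convexBodyGauge (F x) z ^ u) ^ (1 / u)
              ≤ ‖(Matrix.toEuclideanCLM (𝕜 := ℂ) MQ) z‖ ∧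
          ‖(Matrix.toEuclideanCLM (𝕜 := ℂ) MQ) z‖
              ≤ C₁ * (⨍ x in cornerCube n a l, convexBodyGauge (F x) z ^ u) ^ (1 / u)) →
      ∀ M : Matrix (Fin m) (Fin m) ℂ, M.PosDef → M.IsHermitian →
        c * (⨍ x in cornerCube n a l, matrixSetNorm M (F x) ^ u) ^ (1 / u)
            ≤ ‖Matrix.toEuclideanCLM (𝕜 := ℂ) (MQ * M)‖ ∧
        ‖Matrix.toEuclideanCLM (𝕜 := ℂ) (MQ * M)‖
            ≤ C * (⨍ x in cornerCube n a l, matrixSetNorm M (F x) ^ u) ^ (1 / u) := by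
  classical
  set mR : ℝ := (m : ℝ) + 1 with hmR
  have hmR0 : (0:ℝ) < mR := by positivity
  refine ⟨c₁ / (mR ^ 2 * mR ^ (1/u)), C₁ * mR, by positivity, by positivity, ?_⟩
  intro a l hl F hF MQ hMQpd hMQh hMQ M hMpd hMh
  set Q : Set (Fin n → ℝ) := cornerCube n a l with hQdef
  set ν : Measure (Fin n → ℝ) := volume.restrict Q with hνdef
  -- volume of the cube
  have hQvol : volume Q = ENNReal.ofReal l ^ n := by
    have hQeq : Q = Set.pi univ (fun i => Set.Ico (a i) (a i + l)) := by
      ext x; simp [hQdef, cornerCube, Set.mem_pi]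
    rw [hQeq, volume_pi_pi]
    simp [Real.volume_Ico]
  have hκpos : 0 < (volume Q).toReal := by
    rw [hQvol, ENNReal.toReal_pow, ENNReal.toReal_ofReal hl.le]
    positivity
  set κ : ℝ := (volume Q).toReal with hκdef
  -- abbreviations
  set T : EuclideanSpace ℂ (Fin m) →L[ℂ] EuclideanSpace ℂ (Fin m) :=
    Matrix.toEuclideanCLM (𝕜 := ℂ) (MQ * M) with hTdef
  set e : Fin m → EuclideanSpace ℂ (Fin m) := fun j => EuclideanSpace.single j (1:ℂ) with hedef
  set z : Fin m → EuclideanSpace ℂ (Fin m) :=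
    fun j => (Matrix.toEuclideanCLM (𝕜 := ℂ) M) (e j) with hzdef
  have hTapp : ∀ j, T (e j) = (Matrix.toEuclideanCLM (𝕜 := ℂ) MQ) (z j) := by
    intro j
    rw [hTdef, map_mul, ContinuousLinearMap.mul_apply, hzdef]
  have hzne : ∀ j, z j ≠ 0 := by
    intro j
    apply stmt8_posdef_clm_ne_zero hMpd
    intro h
    have : ‖e j‖ = 1 := by rw [hedef]; simp [EuclideanSpace.norm_single]
    rw [h] at this
    simp at this
  set t : Fin m → ℝ := fun j => ‖(Matrix.toEuclideanCLM (𝕜 := ℂ) MQ) (z j)‖ with htdef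
  have htpos : ∀ j, 0 < t j := fun j =>
    norm_pos_iff.mpr (stmt8_posdef_clm_ne_zero hMQpd (hzne j))
  -- averages
  set Avg : Fin m → ℝ := fun j => ⨍ x in Q, convexBodyGauge (F x) (z j) ^ u with hAvgdef
  set S : ℝ := ⨍ x in Q, matrixSetNorm M (F x) ^ u with hSdef
  -- nonnegativity of averages
  have havg_nonneg : ∀ g : (Fin n → ℝ) → ℝ, (∀ x, 0 ≤ g x) → 0 ≤ ⨍ x in Q, g x := by
    intro g hg
    rw [setAverage_eq]
    exact smul_nonneg (by positivity) (integral_nonneg hg)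
  have hAvg_nonneg : ∀ j, 0 ≤ Avg j := fun j =>
    havg_nonneg _ fun x => Real.rpow_nonneg (stmt8_gauge_nonneg _ _) u
  have hS_nonneg : 0 ≤ S :=
    havg_nonneg _ fun x => Real.rpow_nonneg (stmt8_msn_nonneg _ _) u
  have hAvg_eq : ∀ j, Avg j = κ⁻¹ * ∫ x, convexBodyGauge (F x) (z j) ^ u ∂ν := by
    intro j
    show ⨍ x in Q, convexBodyGauge (F x) (z j) ^ u = _
    rw [setAverage_eq, smul_eq_mul]; rfl
  have hS_eq : S = κ⁻¹ * ∫ x, matrixSetNorm M (F x) ^ u ∂ν := by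
    show ⨍ x in Q, matrixSetNorm M (F x) ^ u = _
    rw [setAverage_eq, smul_eq_mul]; rfl
  -- integrability of gauges
  have hIntz : ∀ w : EuclideanSpace ℂ (Fin m), w ≠ 0 →
      Integrable (fun x => convexBodyGauge (F x) w ^ u) ν := by
    intro w hw
    by_contra hni
    have h0 : (⨍ x in Q, convexBodyGauge (F x) w ^ u) = 0 := by
      rw [setAverage_eq, ← hνdef, integral_undef hni, smul_zero]
    have h1 := (hMQ w).2
    rw [hQdef] at h0
    rw [h0, Real.zero_rpow (by positivity : (1:ℝ)/u ≠ 0), mul_zero] at h1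
    exact absurd h1 (not_le.mpr (norm_pos_iff.mpr (stmt8_posdef_clm_ne_zero hMQpd hw)))
  have hMeasz : ∀ w : EuclideanSpace ℂ (Fin m),
      AEMeasurable (fun x => convexBodyGauge (F x) w) ν := by
    intro w
    rcases eq_or_ne w 0 with rfl | hw
    · simpa [stmt8_gauge_zero] using aemeasurable_const (b := (0:ℝ)) (μ := ν)
    · have h1 : AEMeasurable (fun x => convexBodyGauge (F x) w ^ u) ν :=
        (hIntz w hw).aestronglyMeasurable.aemeasurable
      have h2 : (fun x => convexBodyGauge (F x) w)
          = fun x => (convexBodyGauge (F x) w ^ u) ^ (1/u) := by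
        funext x
        rw [← Real.rpow_mul (stmt8_gauge_nonneg _ _), mul_one_div_cancel hu.ne',
          Real.rpow_one]
      rw [h2]
      exact (by fun_prop : Measurable fun s : ℝ => s ^ ((1:ℝ)/u)).comp_aemeasurable h1
  -- dense sequence
  set d : ℕ → EuclideanSpace ℂ (Fin m) :=
    TopologicalSpace.denseSeq (EuclideanSpace ℂ (Fin m)) with hddef
  have hd : DenseRange d := TopologicalSpace.denseRange_denseSeq _
  -- a.e. description of the matrix-set norm as a countable supremum
  have hs_ae : (fun x => matrixSetNorm M (F x)) =ᵐ[ν]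
      (fun x => ⨆ k : {k : ℕ // ‖d k‖ < 1},
        convexBodyGauge (F x) ((Matrix.toEuclideanCLM (𝕜 := ℂ) M) (d k.1))) := by
    filter_upwards [hF] with x hx
    obtain ⟨-, -, -, hbdd, habs⟩ := hx
    obtain ⟨R, hR⟩ := hbdd.subset_closedBall 0
    have hK : ∀ v ∈ F x, ‖v‖ ≤ R := fun v hv => by
      simpa [Metric.mem_closedBall, dist_zero_right] using hR hv
    exact stmt8_msn_eq_iSup hMh hd ⟨0, habs.zero_mem⟩ hK
  have hs_meas : AEMeasurable (fun x => matrixSetNorm M (F x)) ν :=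
    (AEMeasurable.iSup (fun k => hMeasz _)).congr hs_ae.symm
  -- a.e. two-sided comparison with the coordinate gauges
  have hbound : ∀ᵐ x ∂ν,
      (∀ j, convexBodyGauge (F x) (z j) ≤ matrixSetNorm M (F x)) ∧
        matrixSetNorm M (F x) ≤ ∑ j, convexBodyGauge (F x) (z j) := by
    filter_upwards [hF] with x hx
    obtain ⟨-, -, -, hbdd, -⟩ := hx
    obtain ⟨R, hR⟩ := hbdd.subset_closedBall 0
    have hK : ∀ v ∈ F x, ‖v‖ ≤ R := fun v hv => by
      simpa [Metric.mem_closedBall, dist_zero_right] using hR hv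
    constructor
    · intro j
      have he1 : ‖e j‖ ≤ 1 := by rw [hedef]; simp [EuclideanSpace.norm_single]
      exact stmt8_gauge_le_msn hMh hK he1
    · simpa [hzdef, hedef] using stmt8_msn_le_sum hMh (K := F x) hK (M := M)
  -- integrability of `matrixSetNorm ^ u`
  have hsu_meas : AEStronglyMeasurable (fun x => matrixSetNorm M (F x) ^ u) ν :=
    ((by fun_prop : Measurable fun s : ℝ => s ^ u).comp_aemeasurable
      hs_meas).aestronglyMeasurable
  have hg_int : Integrable
      (fun x => (m:ℝ) ^ u * ∑ j, convexBodyGauge (F x) (z j) ^ u) ν :=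
    (integrable_finset_sum _ (fun j _ => hIntz (z j) (hzne j))).const_mul _
  have hsu_int : Integrable (fun x => matrixSetNorm M (F x) ^ u) ν := by
    refine hg_int.mono' hsu_meas ?_
    filter_upwards [hbound] with x hx
    rw [Real.norm_eq_abs, abs_of_nonneg (Real.rpow_nonneg (stmt8_msn_nonneg _ _) u)]
    calc matrixSetNorm M (F x) ^ u
        ≤ (∑ j, convexBodyGauge (F x) (z j)) ^ u :=
          Real.rpow_le_rpow (stmt8_msn_nonneg _ _) hx.2 hu.le
      _ ≤ (m:ℝ) ^ u * ∑ j, convexBodyGauge (F x) (z j) ^ u :=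
          stmt8_sum_rpow hu _ (fun j => stmt8_gauge_nonneg _ _)
  -- average comparisons
  have hAvg_le_S : ∀ j, Avg j ≤ S := by
    intro j
    rw [hAvg_eq j, hS_eq]
    refine mul_le_mul_of_nonneg_left ?_ (by positivity)
    refine integral_mono_ae (hIntz (z j) (hzne j)) hsu_int ?_
    filter_upwards [hbound] with x hx
    exact Real.rpow_le_rpow (stmt8_gauge_nonneg _ _) (hx.1 j) hu.le
  have hS_le : S ≤ (m:ℝ) ^ u * ∑ j, Avg j := by
    have h1 : ∫ x, matrixSetNorm M (F x) ^ u ∂ν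
        ≤ ∫ x, (m:ℝ) ^ u * ∑ j, convexBodyGauge (F x) (z j) ^ u ∂ν := by
      refine integral_mono_ae hsu_int hg_int ?_
      filter_upwards [hbound] with x hx
      calc matrixSetNorm M (F x) ^ u
          ≤ (∑ j, convexBodyGauge (F x) (z j)) ^ u :=
            Real.rpow_le_rpow (stmt8_msn_nonneg _ _) hx.2 hu.le
        _ ≤ (m:ℝ) ^ u * ∑ j, convexBodyGauge (F x) (z j) ^ u :=
            stmt8_sum_rpow hu _ (fun j => stmt8_gauge_nonneg _ _)
    have h2 : ∫ x, (m:ℝ) ^ u * ∑ j, convexBodyGauge (F x) (z j) ^ u ∂ν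
        = (m:ℝ) ^ u * ∑ j, ∫ x, convexBodyGauge (F x) (z j) ^ u ∂ν := by
      rw [integral_const_mul, integral_finset_sum _ (fun j _ => hIntz (z j) (hzne j))]
    rw [hS_eq]
    calc κ⁻¹ * ∫ x, matrixSetNorm M (F x) ^ u ∂ν
        ≤ κ⁻¹ * ((m:ℝ) ^ u * ∑ j, ∫ x, convexBodyGauge (F x) (z j) ^ u ∂ν) := by
          rw [← h2]
          exact mul_le_mul_of_nonneg_left h1 (by positivity)
      _ = (m:ℝ) ^ u * ∑ j, Avg j := by
          rw [Finset.mul_sum, Finset.mul_sum, Finset.mul_sum]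
          refine Finset.sum_congr rfl fun j _ => ?_
          rw [hAvg_eq j]
          ring
  -- operator norm facts
  have hT_le : ‖T‖ ≤ ∑ j, t j := by
    refine (opNorm_le_sum T).trans ?_
    refine le_of_eq (Finset.sum_congr rfl fun j _ => ?_)
    show ‖T (e j)‖ = t j
    rw [hTapp j]
  have ht_le : ∀ j, t j ≤ ‖T‖ := by
    intro j
    show ‖(Matrix.toEuclideanCLM (𝕜 := ℂ) MQ) (z j)‖ ≤ ‖T‖
    rw [← hTapp j]
    calc ‖T (e j)‖ ≤ ‖T‖ * ‖e j‖ := T.le_opNorm _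
      _ = ‖T‖ := by
          have he1 : ‖e j‖ = 1 := by rw [hedef]; simp [EuclideanSpace.norm_single]
          rw [he1, mul_one]
  -- the two-sided key inequalities from the hypothesis
  have hkey1 : ∀ j, c₁ * (Avg j) ^ (1/u) ≤ t j := fun j => (hMQ (z j)).1
  have hkey2 : ∀ j, t j ≤ C₁ * (Avg j) ^ (1/u) := fun j => (hMQ (z j)).2
  have hmcast : (0:ℝ) ≤ (m:ℝ) := Nat.cast_nonneg m
  have hmle : (m:ℝ) ≤ mR := by rw [hmR]; linarith
  constructor
  · -- lower bound
    have hchain : S ^ (1/u) ≤ mR ^ 2 * mR ^ (1/u) / c₁ * ‖T‖ := by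
      have s1 : S ^ (1/u) ≤ ((m:ℝ) ^ u * ∑ j, Avg j) ^ (1/u) :=
        Real.rpow_le_rpow hS_nonneg hS_le (by positivity)
      have s2 : ((m:ℝ) ^ u * ∑ j, Avg j) ^ (1/u)
          = (m:ℝ) * (∑ j, Avg j) ^ (1/u) := by
        rw [Real.mul_rpow (Real.rpow_nonneg hmcast u)
          (Finset.sum_nonneg fun j _ => hAvg_nonneg j), ← Real.rpow_mul hmcast,
          mul_one_div_cancel hu.ne', Real.rpow_one]
      have s3 : (∑ j, Avg j) ^ (1/u) ≤ (m:ℝ) ^ (1/u) * ∑ j, (Avg j) ^ (1/u) :=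
        stmt8_sum_rpow (by positivity) Avg hAvg_nonneg
      have s4 : ∑ j, (Avg j) ^ (1/u) ≤ (∑ j, t j) / c₁ := by
        rw [Finset.sum_div]
        refine Finset.sum_le_sum fun j _ => ?_
        rw [le_div_iff₀ hc₁, mul_comm]
        exact hkey1 j
      have s5 : ∑ j, t j ≤ (m:ℝ) * ‖T‖ := by
        calc ∑ j, t j ≤ ∑ _j : Fin m, ‖T‖ := Finset.sum_le_sum fun j _ => ht_le j
          _ = (m:ℝ) * ‖T‖ := by
              rw [Finset.sum_const, Finset.card_univ, Fintype.card_fin, nsmul_eq_mul]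
      have s6 : (m:ℝ) ^ (1/u) ≤ mR ^ (1/u) :=
        Real.rpow_le_rpow hmcast hmle (by positivity)
      have hTnn : (0:ℝ) ≤ ‖T‖ := norm_nonneg _
      calc S ^ (1/u) ≤ (m:ℝ) * (∑ j, Avg j) ^ (1/u) := by rw [← s2]; exact s1
        _ ≤ (m:ℝ) * ((m:ℝ) ^ (1/u) * ∑ j, (Avg j) ^ (1/u)) :=
            mul_le_mul_of_nonneg_left s3 hmcast
        _ ≤ (m:ℝ) * ((m:ℝ) ^ (1/u) * ((∑ j, t j) / c₁)) := by
            refine mul_le_mul_of_nonneg_left ?_ hmcast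
            exact mul_le_mul_of_nonneg_left s4 (Real.rpow_nonneg hmcast _)
        _ ≤ (m:ℝ) * ((m:ℝ) ^ (1/u) * (((m:ℝ) * ‖T‖) / c₁)) := by
            have h5' : (∑ j, t j) / c₁ ≤ ((m:ℝ) * ‖T‖) / c₁ :=
              (div_le_div_iff_of_pos_right hc₁).mpr s5
            exact mul_le_mul_of_nonneg_left
              (mul_le_mul_of_nonneg_left h5' (Real.rpow_nonneg hmcast _)) hmcast
        _ ≤ mR * (mR ^ (1/u) * ((mR * ‖T‖) / c₁)) := by
            gcongr <;> first
              | exact hmle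
              | exact s6
              | positivity
        _ = mR ^ 2 * mR ^ (1/u) / c₁ * ‖T‖ := by ring
    have hc : (0:ℝ) < mR ^ 2 * mR ^ (1/u) := by positivity
    have := mul_le_mul_of_nonneg_left hchain
      (le_of_lt (div_pos hc₁ hc) : (0:ℝ) ≤ c₁ / (mR ^ 2 * mR ^ (1/u)))
    calc c₁ / (mR ^ 2 * mR ^ (1/u)) * S ^ (1/u)
        ≤ c₁ / (mR ^ 2 * mR ^ (1/u)) * (mR ^ 2 * mR ^ (1/u) / c₁ * ‖T‖) := this
      _ = ‖T‖ := by
          have hone : c₁ / (mR ^ 2 * mR ^ (1/u)) * (mR ^ 2 * mR ^ (1/u) / c₁) = 1 := by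
            field_simp
          rw [← mul_assoc, hone, one_mul]
  · -- upper bound
    have h1 : ∀ j, (Avg j) ^ (1/u) ≤ S ^ (1/u) := fun j =>
      Real.rpow_le_rpow (hAvg_nonneg j) (hAvg_le_S j) (by positivity)
    calc ‖T‖ ≤ ∑ j, t j := hT_le
      _ ≤ ∑ j, C₁ * (Avg j) ^ (1/u) := Finset.sum_le_sum fun j _ => hkey2 j
      _ ≤ ∑ _j : Fin m, C₁ * S ^ (1/u) := by
          refine Finset.sum_le_sum fun j _ => ?_
          exact mul_le_mul_of_nonneg_left (h1 j) hC₁.le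
      _ = (m:ℝ) * (C₁ * S ^ (1/u)) := by
          rw [Finset.sum_const, Finset.card_univ, Fintype.card_fin, nsmul_eq_mul]
      _ ≤ C₁ * mR * S ^ (1/u) := by
          have hSnn : (0:ℝ) ≤ S ^ (1/u) := Real.rpow_nonneg hS_nonneg _
          nlinarith [Real.rpow_nonneg hS_nonneg (1/u)]
end

section
/- Let 𝒬 be a dyadic lattice in ℝ^n, {Q_k}_{k∈ℕ} ⊆ 𝒬 pairwise disjoint dyadic cubes, and E ⊆ ⋃_k 3Q_k an open set such that |3Q_k ∩ E| < 2^{−4n}|Q_k| for every k. Let S be the collection of maximal dyadic cubes L with 9L ⊆ E. Then for every L ∈ S and every k ∈ ℕ: if (9/8)L ∩ (9/8)Q_k ≠ ∅, then 32L ⊆ 3Q_k and 32L ∩ (3Q_k ∖ E) ≠ ∅. -/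
open Set MeasureTheory
open scoped ENNReal

/-- The half-open dyadic cube `2^k([0,1)^n + m)` in `ℝ^n`. -/
def dyadicCube (n : ℕ) (k : ℤ) (mv : Fin n → ℤ) : Set (Fin n → ℝ) :=
  {x | ∀ i, (2 : ℝ) ^ k * (mv i : ℝ) ≤ x i ∧ x i < (2 : ℝ) ^ k * ((mv i : ℝ) + 1)}

/-- The concentric dilate `λ L` (half-open) of the dyadic cube `L` indexed by `(k, mv)`:
the cube with the same center and edge length `λ · 2^k`. -/
def dyadicDilate (n : ℕ) (lam : ℝ) (k : ℤ) (mv : Fin n → ℤ) : Set (Fin n → ℝ) :=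
  {x | ∀ i, (2 : ℝ) ^ k * ((mv i : ℝ) + 1 / 2) - lam * (2 : ℝ) ^ k / 2 ≤ x i ∧
        x i < (2 : ℝ) ^ k * ((mv i : ℝ) + 1 / 2) + lam * (2 : ℝ) ^ k / 2}

private lemma vol_pi_Ico {n : ℕ} (A B : Fin n → ℝ) :
    volume {x : Fin n → ℝ | ∀ i, A i ≤ x i ∧ x i < B i} = ∏ i, ENNReal.ofReal (B i - A i) := by
  have h : {x : Fin n → ℝ | ∀ i, A i ≤ x i ∧ x i < B i} = Set.pi univ fun i => Ico (A i) (B i) := by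
    ext x; simp [Set.mem_pi, mem_Ico]
  rw [h, volume_pi_pi]
  simp [Real.volume_Ico]

private lemma ofReal_two_zpow (z : ℤ) : ENNReal.ofReal ((2:ℝ) ^ z) = (2 : ℝ≥0∞) ^ z := by
  rcases z with n | n
  · show ENNReal.ofReal ((2:ℝ)^(n:ℤ)) = (2:ℝ≥0∞)^(n:ℤ)
    rw [zpow_natCast, zpow_natCast, ENNReal.ofReal_pow (by norm_num)]
    norm_num
  · rw [zpow_negSucc, zpow_negSucc, ENNReal.ofReal_inv_of_pos (by positivity),
      ENNReal.ofReal_pow (by norm_num)]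
    norm_num

private lemma real_pow_identity (q : ℤ) (n : ℕ) :
    (2:ℝ)^(-(4*n:ℤ)) * ((2:ℝ)^q)^n = ((2:ℝ)^(q-4))^n := by
  rw [← zpow_natCast ((2:ℝ)^q), ← zpow_natCast ((2:ℝ)^(q-4)), ← zpow_mul, ← zpow_mul,
    ← zpow_add₀ (two_ne_zero : (2:ℝ) ≠ 0)]
  congr 1; ring

private lemma step2 {n : ℕ} {l q : ℤ} {m a : Fin n → ℤ} {E : Set (Fin n → ℝ)}
    (hpE : dyadicDilate n 9 l m ⊆ E)
    (hcent : ∀ i, -(9/16:ℝ)*((2:ℝ)^l + 2^q) ≤ 2^l*((m i:ℝ)+1/2) - 2^q*((a i:ℝ)+1/2) ∧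
      (2:ℝ)^l*((m i:ℝ)+1/2) - 2^q*((a i:ℝ)+1/2) ≤ (9/16)*((2:ℝ)^l + 2^q))
    (hmeas : volume (dyadicDilate n 3 q a ∩ E) <
      (2:ℝ≥0∞)^(-(4*n:ℤ)) * volume (dyadicCube n q a)) :
    l + 5 ≤ q := by
  by_contra hql
  push_neg at hql
  have hP : (0:ℝ) < 2^l := by positivity
  have hQp : (0:ℝ) < 2^q := by positivity
  have h2 : (2:ℝ)^(q-4) ≤ 2^l := by
    exact zpow_le_zpow_right₀ (by norm_num) (by omega)
  have h16 : (2:ℝ)^(q-4) * 16 = 2^q := by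
    have h := zpow_add₀ (two_ne_zero : (2:ℝ) ≠ 0) (q-4) 4
    rw [sub_add_cancel] at h
    rw [h]; norm_num
  -- interval endpoints
  set AL : Fin n → ℝ := fun i => 2^l*((m i:ℝ)+1/2) - 9*2^l/2 with hALdef
  set BL : Fin n → ℝ := fun i => 2^l*((m i:ℝ)+1/2) + 9*2^l/2 with hBLdef
  set AQ : Fin n → ℝ := fun i => 2^q*((a i:ℝ)+1/2) - 3*2^q/2 with hAQdef
  set BQ : Fin n → ℝ := fun i => 2^q*((a i:ℝ)+1/2) + 3*2^q/2 with hBQdef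
  have hlen : ∀ i, (2:ℝ)^(q-4) ≤ min (BL i) (BQ i) - max (AL i) (AQ i) := by
    intro i
    obtain ⟨hc1, hc2⟩ := hcent i
    rcases max_cases (AL i) (AQ i) with ⟨hm1, _⟩ | ⟨hm1, _⟩ <;>
      rcases min_cases (BL i) (BQ i) with ⟨hm2, _⟩ | ⟨hm2, _⟩ <;>
      rw [hm1, hm2] <;> simp only [hALdef, hBLdef, hAQdef, hBQdef] <;> linarith
  have hRsub : {x : Fin n → ℝ | ∀ i, max (AL i) (AQ i) ≤ x i ∧ x i < min (BL i) (BQ i)} ⊆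
      dyadicDilate n 3 q a ∩ E := by
    intro x hx
    constructor
    · simp only [dyadicDilate, mem_setOf_eq]
      intro i
      obtain ⟨h1, h2⟩ := hx i
      have e1 : AQ i = 2^q*((a i:ℝ)+1/2) - 3*2^q/2 := by simp [hAQdef]
      have e2 : BQ i = 2^q*((a i:ℝ)+1/2) + 3*2^q/2 := by simp [hBQdef]
      constructor
      · calc (2:ℝ)^q*((a i:ℝ)+1/2) - 3*2^q/2 = AQ i := e1.symm
          _ ≤ max (AL i) (AQ i) := le_max_right _ _
          _ ≤ x i := h1
      · calc x i < min (BL i) (BQ i) := h2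
          _ ≤ BQ i := min_le_right _ _
          _ = 2^q*((a i:ℝ)+1/2) + 3*2^q/2 := e2
    · apply hpE
      simp only [dyadicDilate, mem_setOf_eq]
      intro i
      obtain ⟨h1, h2⟩ := hx i
      have e1 : AL i = 2^l*((m i:ℝ)+1/2) - 9*2^l/2 := by simp [hALdef]
      have e2 : BL i = 2^l*((m i:ℝ)+1/2) + 9*2^l/2 := by simp [hBLdef]
      constructor
      · calc (2:ℝ)^l*((m i:ℝ)+1/2) - 9*2^l/2 = AL i := e1.symm
          _ ≤ max (AL i) (AQ i) := le_max_left _ _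
          _ ≤ x i := h1
      · calc x i < min (BL i) (BQ i) := h2
          _ ≤ BL i := min_le_left _ _
          _ = 2^l*((m i:ℝ)+1/2) + 9*2^l/2 := e2
  have hvolR : (∏ _i : Fin n, ENNReal.ofReal ((2:ℝ)^(q-4))) ≤
      volume (dyadicDilate n 3 q a ∩ E) := by
    calc (∏ _i : Fin n, ENNReal.ofReal ((2:ℝ)^(q-4)))
        ≤ ∏ i : Fin n, ENNReal.ofReal (min (BL i) (BQ i) - max (AL i) (AQ i)) :=
          Finset.prod_le_prod' (fun i _ => ENNReal.ofReal_le_ofReal (hlen i))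
      _ = volume {x : Fin n → ℝ | ∀ i, max (AL i) (AQ i) ≤ x i ∧ x i < min (BL i) (BQ i)} :=
          (vol_pi_Ico _ _).symm
      _ ≤ _ := measure_mono hRsub
  have hvolQ : volume (dyadicCube n q a) = (ENNReal.ofReal ((2:ℝ)^q))^n := by
    have e : ∀ i : Fin n, (2:ℝ)^q*((a i:ℝ)+1) - 2^q*(a i:ℝ) = 2^q := fun i => by ring
    calc volume (dyadicCube n q a)
        = ∏ i : Fin n, ENNReal.ofReal ((2:ℝ)^q*((a i:ℝ)+1) - 2^q*(a i:ℝ)) :=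
          vol_pi_Ico _ _
      _ = (ENNReal.ofReal ((2:ℝ)^q))^n := by simp [e, Finset.prod_const]
  have hEq : (2:ℝ≥0∞)^(-(4*n:ℤ)) * volume (dyadicCube n q a)
      = ∏ _i : Fin n, ENNReal.ofReal ((2:ℝ)^(q-4)) := by
    rw [hvolQ, ← ofReal_two_zpow, ← ENNReal.ofReal_pow (by positivity),
      ← ENNReal.ofReal_mul (by positivity), real_pow_identity,
      ENNReal.ofReal_pow (by positivity)]
    simp [Finset.prod_const]
  rw [hEq] at hmeas
  exact absurd hvolR (not_le.mpr hmeas)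

private lemma cube_subset_parent (n : ℕ) (l : ℤ) (m : Fin n → ℤ) :
    dyadicCube n l m ⊆ dyadicCube n (l+1) (fun i => m i / 2) := by
  intro x hx
  simp only [dyadicCube, mem_setOf_eq] at hx ⊢
  intro i
  obtain ⟨h1, h2⟩ := hx i
  have hP : (0:ℝ) < 2^l := by positivity
  have r1 : (2:ℝ)*((m i / 2 : ℤ):ℝ) ≤ (m i : ℝ) := by
    exact_mod_cast (show 2*(m i/2) ≤ m i by omega)
  have r2 : ((m i:ℝ) + 1) ≤ 2*((m i/2 : ℤ):ℝ) + 2 := by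
    exact_mod_cast (show m i + 1 ≤ 2*(m i/2) + 2 by omega)
  have p1 := mul_le_mul_of_nonneg_left r1 hP.le
  have p2 := mul_le_mul_of_nonneg_left r2 hP.le
  rw [zpow_add_one₀ (two_ne_zero : (2:ℝ) ≠ 0)]
  constructor <;> linarith

private lemma cube_ne_parent {n : ℕ} (hn : 0 < n) (l : ℤ) (m : Fin n → ℤ) :
    dyadicCube n l m ≠ dyadicCube n (l+1) (fun i => m i / 2) := by
  intro heq
  have hP : (0:ℝ) < 2^l := by positivity
  set i0 : Fin n := ⟨0, hn⟩ with hi0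
  rcases (show m i0 = 2*(m i0/2) ∨ m i0 = 2*(m i0/2)+1 by omega) with hpar | hpar
  · -- even case : take the point 2^l*(m i0 + 1) in coordinate i0
    set z : Fin n → ℝ := fun j => if j = i0 then (2:ℝ)^l*((m i0:ℝ)+1) else 2^l*(m j:ℝ) with hz
    have hparR : ((m i0:ℤ):ℝ) = 2*((m i0/2 : ℤ):ℝ) := by exact_mod_cast hpar
    have hprod : (2:ℝ)^l * ((m i0:ℤ):ℝ) = 2^l * (2*((m i0/2:ℤ):ℝ)) := by rw [hparR]
    have hzmem : z ∈ dyadicCube n (l+1) (fun i => m i / 2) := by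
      simp only [dyadicCube, mem_setOf_eq]
      intro i
      rw [zpow_add_one₀ (two_ne_zero : (2:ℝ) ≠ 0)]
      have r1 : (2:ℝ)*((m i / 2 : ℤ):ℝ) ≤ (m i : ℝ) := by
        exact_mod_cast (show 2*(m i/2) ≤ m i by omega)
      have r2 : ((m i:ℝ) + 1) ≤ 2*((m i/2 : ℤ):ℝ) + 2 := by
        exact_mod_cast (show m i + 1 ≤ 2*(m i/2) + 2 by omega)
      have p1 := mul_le_mul_of_nonneg_left r1 hP.le
      have p2 := mul_le_mul_of_nonneg_left r2 hP.le
      by_cases hii : i = i0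
      · have hpar2 : ((m i:ℤ):ℝ) = 2*((m i/2 : ℤ):ℝ) := by rw [hii]; exact_mod_cast hpar
        have hprod2 : (2:ℝ)^l * ((m i:ℤ):ℝ) = 2^l * (2*((m i/2:ℤ):ℝ)) := by rw [hpar2]
        have hzi : z i = (2:ℝ)^l*((m i:ℝ)+1) := by rw [hii]; simp [hz]
        rw [hzi]
        constructor <;> linarith
      · have hzi : z i = (2:ℝ)^l*(m i:ℝ) := by simp [hz, hii]
        rw [hzi]
        constructor <;> linarith
    rw [← heq] at hzmem
    simp only [dyadicCube, mem_setOf_eq] at hzmem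
    have h := (hzmem i0).2
    have hzi : z i0 = (2:ℝ)^l*((m i0:ℝ)+1) := by simp [hz]
    rw [hzi] at h
    exact lt_irrefl _ h
  · -- odd case : take the point 2^l*(m i0 - 1) in coordinate i0
    set z : Fin n → ℝ := fun j => if j = i0 then (2:ℝ)^l*((m i0:ℝ)-1) else 2^l*(m j:ℝ) with hz
    have hparR : ((m i0:ℤ):ℝ) = 2*((m i0/2 : ℤ):ℝ) + 1 := by exact_mod_cast hpar
    have hprod : (2:ℝ)^l * ((m i0:ℤ):ℝ) = 2^l * (2*((m i0/2:ℤ):ℝ) + 1) := by rw [hparR]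
    have hzmem : z ∈ dyadicCube n (l+1) (fun i => m i / 2) := by
      simp only [dyadicCube, mem_setOf_eq]
      intro i
      rw [zpow_add_one₀ (two_ne_zero : (2:ℝ) ≠ 0)]
      have r1 : (2:ℝ)*((m i / 2 : ℤ):ℝ) ≤ (m i : ℝ) := by
        exact_mod_cast (show 2*(m i/2) ≤ m i by omega)
      have r2 : ((m i:ℝ) + 1) ≤ 2*((m i/2 : ℤ):ℝ) + 2 := by
        exact_mod_cast (show m i + 1 ≤ 2*(m i/2) + 2 by omega)
      have p1 := mul_le_mul_of_nonneg_left r1 hP.le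
      have p2 := mul_le_mul_of_nonneg_left r2 hP.le
      by_cases hii : i = i0
      · have hpar2 : ((m i:ℤ):ℝ) = 2*((m i/2 : ℤ):ℝ) + 1 := by rw [hii]; exact_mod_cast hpar
        have hprod2 : (2:ℝ)^l * ((m i:ℤ):ℝ) = 2^l * (2*((m i/2:ℤ):ℝ) + 1) := by rw [hpar2]
        have hzi : z i = (2:ℝ)^l*((m i:ℝ)-1) := by rw [hii]; simp [hz]
        rw [hzi]
        constructor <;> linarith
      · have hzi : z i = (2:ℝ)^l*(m i:ℝ) := by simp [hz, hii]
        rw [hzi]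
        constructor <;> linarith
    rw [← heq] at hzmem
    simp only [dyadicCube, mem_setOf_eq] at hzmem
    have h := (hzmem i0).1
    have hzi : z i0 = (2:ℝ)^l*((m i0:ℝ)-1) := by simp [hz]
    rw [hzi] at h
    nlinarith

/-- Let `{Q_k}` be pairwise disjoint dyadic cubes and let
`E ⊆ ⋃_k 3Q_k` be open with `|3Q_k ∩ E| < 2^{−4n} |Q_k|` for every `k`. Let `S` be
the collection of maximal dyadic cubes `L` with `9L ⊆ E`. Then for every `L ∈ S` and
every `k`, if `(9/8)L ∩ (9/8)Q_k ≠ ∅`, then `32L ⊆ 3Q_k` and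
`32L ∩ (3Q_k ∖ E) ≠ ∅`. -/
theorem stmt15 (n : ℕ) (Q : ℕ → ℤ × (Fin n → ℤ))
    (hdisj : ∀ j k, j ≠ k →
      dyadicCube n (Q j).1 (Q j).2 ∩ dyadicCube n (Q k).1 (Q k).2 = ∅)
    (E : Set (Fin n → ℝ)) (hE : IsOpen E)
    (hsub : E ⊆ ⋃ k, dyadicDilate n 3 (Q k).1 (Q k).2)
    (hmeas : ∀ k, volume (dyadicDilate n 3 (Q k).1 (Q k).2 ∩ E)
        < (2 : ℝ≥0∞) ^ (-(4 * n : ℤ)) * volume (dyadicCube n (Q k).1 (Q k).2))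
    (S : Set (ℤ × (Fin n → ℤ)))
    (hS : ∀ k mv, (k, mv) ∈ S ↔
      (dyadicDilate n 9 k mv ⊆ E ∧
        ∀ k' mv', dyadicCube n k mv ⊆ dyadicCube n k' mv' →
          dyadicDilate n 9 k' mv' ⊆ E → dyadicCube n k mv = dyadicCube n k' mv')) :
    ∀ p ∈ S, ∀ k : ℕ,
      (dyadicDilate n (9 / 8) p.1 p.2 ∩
        dyadicDilate n (9 / 8) (Q k).1 (Q k).2).Nonempty →
      dyadicDilate n 32 p.1 p.2 ⊆ dyadicDilate n 3 (Q k).1 (Q k).2 ∧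
      (dyadicDilate n 32 p.1 p.2 ∩
        (dyadicDilate n 3 (Q k).1 (Q k).2 \ E)).Nonempty := by
  rcases Nat.eq_zero_or_pos n with hn | hn
  · exfalso
    subst hn
    have h01 := hdisj 0 1 (by norm_num)
    have hx : (fun _ : Fin 0 => (0:ℝ)) ∈
        dyadicCube 0 (Q 0).1 (Q 0).2 ∩ dyadicCube 0 (Q 1).1 (Q 1).2 := by
      constructor <;> · simp only [dyadicCube, mem_setOf_eq]; intro i; exact i.elim0
    rw [h01] at hx
    exact hx
  intro p hp k hint
  obtain ⟨l, m⟩ := p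
  obtain ⟨hpE, hpmax⟩ := (hS l m).mp hp
  obtain ⟨x, hxL, hxQ⟩ := hint
  simp only [dyadicDilate, mem_setOf_eq] at hxL hxQ
  have hP : (0:ℝ) < 2^l := by positivity
  have hQp : (0:ℝ) < (2:ℝ)^(Q k).1 := by positivity
  have hcent : ∀ i, -(9/16:ℝ)*((2:ℝ)^l + 2^(Q k).1) ≤
      2^l*((m i:ℝ)+1/2) - 2^(Q k).1*(((Q k).2 i:ℝ)+1/2) ∧
      (2:ℝ)^l*((m i:ℝ)+1/2) - 2^(Q k).1*(((Q k).2 i:ℝ)+1/2) ≤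
        (9/16)*((2:ℝ)^l + 2^(Q k).1) := by
    intro i
    obtain ⟨h1, h2⟩ := hxL i
    obtain ⟨h3, h4⟩ := hxQ i
    constructor <;> linarith
  have hlq : l + 5 ≤ (Q k).1 := step2 hpE hcent (hmeas k)
  have h32 : 32*(2:ℝ)^l ≤ 2^(Q k).1 := by
    have h1 : (2:ℝ)^(l+5) ≤ 2^(Q k).1 := zpow_le_zpow_right₀ (by norm_num) hlq
    have h2 : (2:ℝ)^(l+5) = 2^l * 32 := by
      rw [zpow_add₀ (two_ne_zero : (2:ℝ) ≠ 0)]; norm_num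
    linarith
  have hsub32 : dyadicDilate n 32 l m ⊆ dyadicDilate n 3 (Q k).1 (Q k).2 := by
    intro y hy
    simp only [dyadicDilate, mem_setOf_eq] at hy ⊢
    intro i
    obtain ⟨h1, h2⟩ := hy i
    obtain ⟨hc1, hc2⟩ := hcent i
    constructor <;> linarith
  refine ⟨hsub32, ?_⟩
  have hne := cube_ne_parent hn l m
  have hnsub : ¬ dyadicDilate n 9 (l+1) (fun i => m i / 2) ⊆ E :=
    fun h => hne (hpmax (l+1) (fun i => m i / 2) (cube_subset_parent n l m) h)
  obtain ⟨y, hy9, hyE⟩ := not_subset.mp hnsub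
  have hy32 : y ∈ dyadicDilate n 32 l m := by
    simp only [dyadicDilate, mem_setOf_eq] at hy9 ⊢
    intro i
    obtain ⟨h1, h2⟩ := hy9 i
    rw [zpow_add_one₀ (two_ne_zero : (2:ℝ) ≠ 0)] at h1 h2
    have r1 : (2:ℝ)*((m i / 2 : ℤ):ℝ) ≤ (m i : ℝ) := by
      exact_mod_cast (show 2*(m i/2) ≤ m i by omega)
    have r2 : (m i : ℝ) ≤ 2*((m i/2:ℤ):ℝ) + 1 := by
      exact_mod_cast (show m i ≤ 2*(m i/2)+1 by omega)
    have p1 := mul_le_mul_of_nonneg_left r1 hP.le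
    have p2 := mul_le_mul_of_nonneg_left r2 hP.le
    constructor <;> linarith
  exact ⟨y, hy32, hsub32 hy32, hyE⟩
end

section
/- Let s ∈ ℤ₊, δ ∈ (0,1], and let K be an (s,δ)-type standard kernel on ℝ^n × ℝ^n. Let Q be a cube with center c_Q and edge length l(Q), and let a : ℝ^n → ℂ^m be integrable, supported in Q, with ∫ y^γ a(y) dy = 0 for all multi-indices |γ| ≤ s. Then for every x with |x − c_Q| ≥ 2√n · l(Q), |∫ K(x,y) a(y) dy| ≤ C (l(Q)/|x − c_Q|)^{n+s+δ} · l(Q)^{−n} ∫_Q |a(y)| dy, where C depends only on the kernel constants, n, and s. -/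
open MeasureTheory

open Set

lemma stmt18_taylor_rem {F : Type*} [NormedAddCommGroup F] [NormedSpace ℝ F] :
    ∀ (s : ℕ) (g : ℝ → F) (U : Set ℝ), IsOpen U → Set.Icc (0:ℝ) 1 ⊆ U →
    ContDiffOn ℝ s g U → ∀ B : ℝ,
    (∀ ξ ∈ Set.Icc (0:ℝ) 1,
      ‖iteratedDerivWithin s g U ξ - iteratedDerivWithin s g U 0‖ ≤ B) →
    ∀ t ∈ Set.Icc (0:ℝ) 1,
    ‖g t - ∑ k ∈ Finset.range (s+1),
        ((t ^ k / k.factorial : ℝ)) • iteratedDerivWithin k g U 0‖ ≤ B := by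
  intro s
  induction s with
  | zero =>
    intro g U hU hIU hg B hB t ht
    have h0 : (0:ℝ) ∈ Icc (0:ℝ) 1 := by constructor <;> norm_num
    have := hB t ht
    simpa [iteratedDerivWithin_zero] using this
  | succ s IH =>
    intro g U hU hIU hg B hB t ht
    have hUD : UniqueDiffOn ℝ U := hU.uniqueDiffOn
    have h0U : (0:ℝ) ∈ U := hIU ⟨le_refl _, by norm_num⟩
    set h : ℝ → F := derivWithin g U with hh
    have hhC : ContDiffOn ℝ s h U := hg.derivWithin hUD (by exact_mod_cast le_refl _)
    have hsucc : ∀ k : ℕ, ∀ z ∈ U,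
        iteratedDerivWithin (k+1) g U z = iteratedDerivWithin k h U z := by
      intro k z hz
      rw [iteratedDerivWithin_succ']
    have hB0 : 0 ≤ B := le_trans (by simp) (hB 0 ⟨le_refl _, by norm_num⟩)
    -- IH for h
    have IHh := IH h U hU hIU hhC B (by
      intro ξ hξ
      rw [← hsucc s ξ (hIU hξ), ← hsucc s 0 h0U]
      exact hB ξ hξ)
    -- derivative of the remainder
    set R : ℝ → F := fun t => g t - ∑ k ∈ Finset.range (s+2),
        ((t ^ k / k.factorial : ℝ)) • iteratedDerivWithin k g U 0 with hR
    set Rh : ℝ → F := fun t => h t - ∑ k ∈ Finset.range (s+1),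
        ((t ^ k / k.factorial : ℝ)) • iteratedDerivWithin k h U 0 with hRh
    have hderiv : ∀ u ∈ Icc (0:ℝ) 1, HasDerivWithinAt R (Rh u) (Icc (0:ℝ) 1) u := by
      intro u hu
      have huU : u ∈ U := hIU hu
      have hgd : HasDerivAt g (h u) u := by
        have : DifferentiableWithinAt ℝ g U u :=
          (hg.differentiableOn (by simp)) u huU
        have hd : DifferentiableAt ℝ g u := this.differentiableAt (hU.mem_nhds huU)
        have : derivWithin g U u = deriv g u := derivWithin_of_isOpen hU huU
        rw [hh, this]
        exact hd.hasDerivAt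
      have hpoly : HasDerivAt (fun t : ℝ => ∑ k ∈ Finset.range (s+2),
          ((t ^ k / k.factorial : ℝ)) • iteratedDerivWithin k g U 0)
          (∑ k ∈ Finset.range (s+1),
          ((u ^ k / k.factorial : ℝ)) • iteratedDerivWithin (k+1) g U 0) u := by
        have : HasDerivAt (fun t : ℝ => ∑ k ∈ Finset.range (s+2),
            ((t ^ k / k.factorial : ℝ)) • iteratedDerivWithin k g U 0)
            (∑ k ∈ Finset.range (s+2),
            ((k * u ^ (k-1) / k.factorial : ℝ)) • iteratedDerivWithin k g U 0) u := by
          apply HasDerivAt.fun_sum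
          intro k _
          exact ((hasDerivAt_pow k u).div_const _).smul_const _
        convert this using 1
        rw [Finset.sum_range_succ' (fun k => ((k * u ^ (k-1) / k.factorial : ℝ)) •
          iteratedDerivWithin k g U 0) (s+1)]
        simp only [Nat.cast_zero, zero_mul, Nat.factorial_zero, Nat.cast_one, zero_div, zero_smul,
          add_zero]
        apply Finset.sum_congr rfl
        intro k _
        congr 1
        have : ((k:ℝ)+1) ≠ 0 := by positivity
        field_simp [Nat.factorial_succ]
        simp only [Nat.add_sub_cancel, Nat.factorial_succ, Nat.cast_mul, Nat.cast_add, Nat.cast_one]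
        ring
      have : HasDerivAt R (h u - ∑ k ∈ Finset.range (s+1),
          ((u ^ k / k.factorial : ℝ)) • iteratedDerivWithin (k+1) g U 0) u :=
        hgd.sub hpoly
      have heq : (h u - ∑ k ∈ Finset.range (s+1),
          ((u ^ k / k.factorial : ℝ)) • iteratedDerivWithin (k+1) g U 0) = Rh u := by
        rw [hRh]
        congr 1
        apply Finset.sum_congr rfl
        intro k _
        rw [hsucc k 0 h0U]
      rw [heq] at this
      exact this.hasDerivWithinAt
    have hbound : ∀ u ∈ Ico (0:ℝ) 1, ‖Rh u‖ ≤ B := fun u hu => IHh u (Ico_subset_Icc_self hu)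
    have := norm_image_sub_le_of_norm_deriv_le_segment' hderiv hbound t ht
    have hR0 : R 0 = 0 := by
      rw [hR]
      simp [Finset.sum_range_succ']
    rw [hR0, sub_zero] at this
    calc ‖R t‖ ≤ B * (t - 0) := this
      _ ≤ B := by nlinarith [ht.1, ht.2]

open Set

lemma stmt18_chain {n : ℕ} {F : EuclideanSpace ℝ (Fin n) → ℂ}
    {W : Set (EuclideanSpace ℝ (Fin n))} (hW : IsOpen W) {s : ℕ}
    (hF : ContDiffOn ℝ s F W) (c v : EuclideanSpace ℝ (Fin n)) :
    ∀ k, k ≤ s → ∀ t : ℝ, (c + t • v) ∈ W →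
      iteratedDerivWithin k (fun t => F (c + t • v)) ((fun t : ℝ => c + t • v) ⁻¹' W) t
        = iteratedFDeriv ℝ k F (c + t • v) (fun _ => v) := by
  set γ : ℝ → EuclideanSpace ℝ (Fin n) := fun t => c + t • v with hγdef
  set U : Set ℝ := γ ⁻¹' W with hUdef
  have hγc : Continuous γ := by fun_prop
  have hU : IsOpen U := hW.preimage hγc
  have hγd : ∀ t : ℝ, HasDerivAt γ v t := by
    intro t
    have h1 : HasDerivAt (fun t : ℝ => t • v) v t := by
      simpa using (hasDerivAt_id t).smul_const v
    exact h1.const_add c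
  -- key derivative step
  have hkey : ∀ k, k < s → ∀ t ∈ U,
      HasDerivAt (fun t => iteratedFDeriv ℝ k F (γ t) (fun _ => v))
        (iteratedFDeriv ℝ (k+1) F (γ t) (fun _ => v)) t := by
    intro k hk t ht
    have hz : γ t ∈ W := ht
    set G := iteratedFDerivWithin ℝ k F W with hGdef
    have hGdiff : DifferentiableOn ℝ G W :=
      hF.differentiableOn_iteratedFDerivWithin (by exact_mod_cast hk) hW.uniqueDiffOn
    have hGz : DifferentiableAt ℝ G (γ t) :=
      (hGdiff (γ t) hz).differentiableAt (hW.mem_nhds hz)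
    have hcomp : HasDerivAt (fun u => G (γ u)) (fderiv ℝ G (γ t) v) t :=
      hGz.hasFDerivAt.comp_hasDerivAt t (hγd t)
    set L := ContinuousMultilinearMap.apply ℝ (fun _ : Fin k => EuclideanSpace ℝ (Fin n)) ℂ
      (fun _ => v) with hLdef
    have happ : HasDerivAt (fun u => L (G (γ u))) (L (fderiv ℝ G (γ t) v)) t :=
      L.hasFDerivAt.comp_hasDerivAt t hcomp
    have hval : L (fderiv ℝ G (γ t) v) = iteratedFDeriv ℝ (k+1) F (γ t) (fun _ => v) := by
      rw [← iteratedFDerivWithin_of_isOpen (k+1) hW hz]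
      rw [show (fun _ : Fin (k+1) => v) = Fin.cons v (fun _ : Fin k => v) by
        funext i; refine Fin.cases ?_ ?_ i <;> simp]
      rw [iteratedFDerivWithin_succ_apply_left]
      rw [← fderivWithin_of_isOpen hW hz]
      simp [hLdef, ContinuousMultilinearMap.apply_apply, Fin.tail]
      rfl
    have hfun : (fun u => L (G (γ u))) =ᶠ[nhds t] fun u => iteratedFDeriv ℝ k F (γ u) (fun _ => v) := by
      filter_upwards [hU.mem_nhds ht] with u hu
      simp [hLdef, hGdef, ContinuousMultilinearMap.apply_apply,
        iteratedFDerivWithin_of_isOpen k hW hu]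
    rw [hval] at happ
    exact hfun.hasDerivAt_iff.mp happ
  -- induction
  intro k hk
  induction k with
  | zero =>
    intro t ht
    rw [iteratedDerivWithin_zero]
    simp
  | succ k IH =>
    intro t ht
    have ht' : t ∈ U := ht
    rw [iteratedDerivWithin_succ]
    have hEq : Set.EqOn (iteratedDerivWithin k (fun t => F (γ t)) U)
        (fun t => iteratedFDeriv ℝ k F (γ t) (fun _ => v)) U :=
      fun u hu => IH (le_of_lt (Nat.lt_of_succ_le hk)) u hu
    rw [derivWithin_congr hEq (hEq ht')]
    rw [derivWithin_of_isOpen hU ht']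
    exact (hkey k (Nat.lt_of_succ_le hk) t ht').deriv
open MeasureTheory Set

variable {n m : ℕ} {c : EuclideanSpace ℝ (Fin n)} {l : ℝ}
  {a : EuclideanSpace ℝ (Fin n) → EuclideanSpace ℂ (Fin m)}

lemma stmt18_norm_sub_le (hl : 0 ≤ l) (y : EuclideanSpace ℝ (Fin n))
    (h : ∀ i, |y i - c i| ≤ l / 2) : ‖y - c‖ ≤ Real.sqrt n * (l / 2) := by
  have h1 : ‖y - c‖ = Real.sqrt (∑ i, ‖y i - c i‖ ^ 2) := by
    rw [EuclideanSpace.norm_eq]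
    rfl
  rw [h1]
  have h2 : (∑ i, ‖y i - c i‖ ^ 2) ≤ n * (l / 2) ^ 2 := by
    calc (∑ i, ‖y i - c i‖ ^ 2) ≤ ∑ _i : Fin n, (l / 2) ^ 2 := by
          apply Finset.sum_le_sum
          intro i _
          have := h i
          rw [Real.norm_eq_abs]
          nlinarith [abs_nonneg (y i - c i)]
      _ = n * (l / 2) ^ 2 := by simp [mul_comm]
  calc Real.sqrt (∑ i, ‖y i - c i‖ ^ 2) ≤ Real.sqrt (n * (l / 2) ^ 2) := Real.sqrt_le_sqrt h2
    _ = Real.sqrt n * (l / 2) := by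
        rw [Real.sqrt_mul (Nat.cast_nonneg n), Real.sqrt_sq (by linarith)]

lemma stmt18_isClosed : IsClosed {y : EuclideanSpace ℝ (Fin n) | ∀ i, |y i - c i| ≤ l / 2} := by
  have : {y : EuclideanSpace ℝ (Fin n) | ∀ i, |y i - c i| ≤ l / 2}
      = ⋂ i, {y : EuclideanSpace ℝ (Fin n) | |y i - c i| ≤ l / 2} := by
    ext y; simp
  rw [this]
  apply isClosed_iInter
  intro i
  have hc : Continuous fun y : EuclideanSpace ℝ (Fin n) => |y i - c i| := by
    apply Continuous.abs
    exact ((EuclideanSpace.proj i).continuous).sub continuous_const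
  exact isClosed_le hc continuous_const

lemma stmt18_isCompact (hl : 0 ≤ l) :
    IsCompact {y : EuclideanSpace ℝ (Fin n) | ∀ i, |y i - c i| ≤ l / 2} := by
  apply Metric.isCompact_of_isClosed_isBounded stmt18_isClosed
  apply (Metric.isBounded_closedBall (x := c) (r := Real.sqrt n * (l / 2))).subset
  intro y hy
  rw [Metric.mem_closedBall, dist_eq_norm]
  exact stmt18_norm_sub_le hl y hy

lemma stmt18_integrable_smul {𝕜 : Type*} [NormedField 𝕜]
    [NormedSpace 𝕜 (EuclideanSpace ℂ (Fin m))]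
    (hl : 0 ≤ l) (ha : Integrable a)
    (hsupp : Function.support a ⊆ {y | ∀ i, |y i - c i| ≤ l / 2})
    (φ : EuclideanSpace ℝ (Fin n) → 𝕜) (hφ : Continuous φ) :
    Integrable (fun y => φ y • a y) := by
  obtain ⟨M, hM⟩ := (stmt18_isCompact hl (c := c)).exists_bound_of_continuousOn
    hφ.continuousOn
  apply Integrable.mono' ((ha.norm.const_mul (max M 0)))
    ((hφ.aestronglyMeasurable).smul ha.1)
  filter_upwards with y
  by_cases hy : a y = 0
  · simp [hy]
  · have hyQ : y ∈ {y | ∀ i, |y i - c i| ≤ l / 2} := hsupp (Function.mem_support.mpr hy)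
    calc ‖φ y • a y‖ ≤ ‖φ y‖ * ‖a y‖ := norm_smul_le _ _
      _ ≤ max M 0 * ‖a y‖ :=
        mul_le_mul_of_nonneg_right (le_trans (hM y hyQ) (le_max_left _ _)) (norm_nonneg _)

lemma stmt18_mom_prod {s : ℕ} (hl : 0 ≤ l) (ha : Integrable a)
    (hsupp : Function.support a ⊆ {y | ∀ i, |y i - c i| ≤ l / 2})
    (hmom : ∀ γ : Fin n → ℕ, (∑ i, γ i) ≤ s → (∫ y, (∏ i, y i ^ γ i) • a y) = 0)
    (k : ℕ) (hk : k ≤ s) (r : Fin k → Fin n) :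
    ∫ y, (∏ j, (y (r j) - c (r j))) • a y = 0 := by
  classical
  -- first: pure monomials over subsets
  have hT : ∀ T : Finset (Fin k), (∫ y, (∏ j ∈ T, y (r j)) • a y) = 0 := by
    intro T
    have hcard : (∑ i, ((T.filter fun j => r j = i).card : ℕ)) ≤ s := by
      rw [← Finset.card_eq_sum_card_fiberwise (fun j _ => Finset.mem_univ (r j))]
      exact le_trans (Finset.card_le_card (Finset.subset_univ T)) (by simp [hk])
    have hmono : ∀ y : EuclideanSpace ℝ (Fin n),
        (∏ j ∈ T, y (r j)) = ∏ i, y i ^ (T.filter fun j => r j = i).card := by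
      intro y
      rw [← Finset.prod_fiberwise_of_maps_to (fun j _ => Finset.mem_univ (r j))
        (fun j => y (r j))]
      apply Finset.prod_congr rfl
      intro i _
      rw [Finset.prod_congr rfl (fun j hj => by rw [(Finset.mem_filter.mp hj).2]),
        Finset.prod_const]
    calc (∫ y, (∏ j ∈ T, y (r j)) • a y)
        = ∫ y, (∏ i, y i ^ (T.filter fun j => r j = i).card) • a y := by
          congr 1; funext y; rw [hmono y]
      _ = 0 := hmom _ hcard
  -- expand the product of differences
  have hexp : ∀ y : EuclideanSpace ℝ (Fin n),
      (∏ j, (y (r j) - c (r j)))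
        = ∑ T ∈ (Finset.univ : Finset (Fin k)).powerset,
            (∏ j ∈ T, y (r j)) * ∏ j ∈ Finset.univ \ T, (-(c (r j))) := by
    intro y
    rw [← Finset.prod_add]
    apply Finset.prod_congr rfl
    intro j _
    ring
  calc (∫ y, (∏ j, (y (r j) - c (r j))) • a y)
      = ∫ y, ∑ T ∈ (Finset.univ : Finset (Fin k)).powerset,
          ((∏ j ∈ Finset.univ \ T, (-(c (r j)))) • ((∏ j ∈ T, y (r j)) • a y)) := by
        congr 1; funext y
        rw [hexp y, Finset.sum_smul]
        apply Finset.sum_congr rfl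
        intro T _
        rw [mul_comm, mul_smul]
    _ = ∑ T ∈ (Finset.univ : Finset (Fin k)).powerset,
          ∫ y, ((∏ j ∈ Finset.univ \ T, (-(c (r j)))) • ((∏ j ∈ T, y (r j)) • a y)) := by
        apply integral_finset_sum
        intro T _
        apply Integrable.fun_smul
        apply stmt18_integrable_smul hl ha hsupp
        exact continuous_finset_prod _ fun j _ => (EuclideanSpace.proj (r j)).continuous
    _ = 0 := by
        apply Finset.sum_eq_zero
        intro T _
        rw [integral_smul, hT T, smul_zero]

lemma stmt18_mom_multilinear {s : ℕ} (hl : 0 ≤ l) (ha : Integrable a)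
    (hsupp : Function.support a ⊆ {y | ∀ i, |y i - c i| ≤ l / 2})
    (hmom : ∀ γ : Fin n → ℕ, (∑ i, γ i) ≤ s → (∫ y, (∏ i, y i ^ γ i) • a y) = 0)
    (k : ℕ) (hk : k ≤ s)
    (f : ContinuousMultilinearMap ℝ (fun _ : Fin k => EuclideanSpace ℝ (Fin n)) ℂ) :
    ∫ y, (f fun _ => y - c) • a y = 0 := by
  classical
  set e : Fin n → EuclideanSpace ℝ (Fin n) := fun i => EuclideanSpace.single i (1:ℝ) with he
  have hrepr : ∀ y : EuclideanSpace ℝ (Fin n), y - c = ∑ i, (y i - c i) • e i := by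
    intro y
    have := (EuclideanSpace.basisFun (Fin n) ℝ).sum_repr (y - c)
    rw [← this]
    apply Finset.sum_congr rfl
    intro i _
    simp [he, EuclideanSpace.basisFun_repr, EuclideanSpace.basisFun_apply, PiLp.sub_apply]
  have hexpand : ∀ y : EuclideanSpace ℝ (Fin n),
      (f fun _ => y - c) = ∑ r : Fin k → Fin n,
        (∏ j, (y (r j) - c (r j))) • f (fun j => e (r j)) := by
    intro y
    calc (f fun _ => y - c) = f (fun _ => ∑ i, (y i - c i) • e i) := by
          congr 1; funext j; exact hrepr y
      _ = ∑ r : Fin k → Fin n, f (fun j => (y (r j) - c (r j)) • e (r j)) :=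
          f.toMultilinearMap.map_sum (fun _ i => (y i - c i) • e i)
      _ = ∑ r : Fin k → Fin n, (∏ j, (y (r j) - c (r j))) • f (fun j => e (r j)) := by
          apply Finset.sum_congr rfl
          intro r _
          exact f.toMultilinearMap.map_smul_univ (fun j => (y (r j) - c (r j)))
            (fun j => e (r j))
  calc (∫ y, (f fun _ => y - c) • a y)
      = ∫ y, ∑ r : Fin k → Fin n,
          (f (fun j => e (r j))) • ((∏ j, (y (r j) - c (r j))) • a y) := by
        congr 1; funext y
        rw [hexpand y, Finset.sum_smul]
        apply Finset.sum_congr rfl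
        intro r _
        rw [smul_assoc, smul_comm]
    _ = ∑ r : Fin k → Fin n, ∫ y,
          (f (fun j => e (r j))) • ((∏ j, (y (r j) - c (r j))) • a y) := by
        apply integral_finset_sum
        intro r _
        apply Integrable.fun_smul
        apply stmt18_integrable_smul hl ha hsupp
        exact continuous_finset_prod _ fun j _ =>
          ((EuclideanSpace.proj (r j)).continuous).sub continuous_const
    _ = 0 := by
        apply Finset.sum_eq_zero
        intro r _
        rw [integral_smul, stmt18_mom_prod hl ha hsupp hmom k hk r, smul_zero]

lemma stmt18_mom_taylor {s : ℕ} (hl : 0 ≤ l) (ha : Integrable a)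
    (hsupp : Function.support a ⊆ {y | ∀ i, |y i - c i| ≤ l / 2})
    (hmom : ∀ γ : Fin n → ℕ, (∑ i, γ i) ≤ s → (∫ y, (∏ i, y i ^ γ i) • a y) = 0)
    (f : (k : ℕ) → ContinuousMultilinearMap ℝ (fun _ : Fin k => EuclideanSpace ℝ (Fin n)) ℂ) :
    ∫ y, (∑ k ∈ Finset.range (s+1),
      ((1:ℝ) / k.factorial) • (f k fun _ => y - c)) • a y = 0 := by
  calc (∫ y, (∑ k ∈ Finset.range (s+1),
        ((1:ℝ) / k.factorial) • (f k fun _ => y - c)) • a y)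
      = ∫ y, ∑ k ∈ Finset.range (s+1),
          ((1:ℝ) / k.factorial) • ((f k fun _ => y - c) • a y) := by
        congr 1; funext y
        rw [Finset.sum_smul]
        apply Finset.sum_congr rfl
        intro k _
        rw [smul_assoc]
    _ = ∑ k ∈ Finset.range (s+1), ∫ y,
          ((1:ℝ) / k.factorial) • ((f k fun _ => y - c) • a y) := by
        apply integral_finset_sum
        intro k _
        apply Integrable.fun_smul
        apply stmt18_integrable_smul hl ha hsupp
        exact (f k).cont.comp (continuous_pi fun _ => continuous_id.sub continuous_const)
    _ = 0 := by
        apply Finset.sum_eq_zero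
        intro k hkmem
        rw [integral_smul,
          stmt18_mom_multilinear hl ha hsupp hmom k (Nat.lt_succ_iff.mp (Finset.mem_range.mp hkmem)) _,
          smul_zero]

set_option maxHeartbeats 2000000 in
lemma stmt18_main {n m s : ℕ} {δ : ℝ} (hδ0 : 0 < δ) (hδ1 : δ ≤ 1)
    {C₀ : ℝ} (hC₀ : 0 < C₀) (hn : 0 < n)
    (K : EuclideanSpace ℝ (Fin n) → EuclideanSpace ℝ (Fin n) → ℂ)
    (hK : ∀ x, ContDiffOn ℝ (s : ℕ∞) (K x) {y | y ≠ x})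
    (hsize : ∀ x y, x ≠ y → ∀ k ≤ s,
        ‖iteratedFDeriv ℝ k (K x) y‖ ≤ C₀ * ‖x - y‖ ^ (-(n + k : ℝ)))
    (hholder : ∀ x y z, x ≠ y → 2 * ‖y - z‖ ≤ ‖x - y‖ →
        ‖iteratedFDeriv ℝ s (K x) y - iteratedFDeriv ℝ s (K x) z‖
          ≤ C₀ * ‖y - z‖ ^ δ / ‖x - y‖ ^ ((n : ℝ) + s + δ))
    (c : EuclideanSpace ℝ (Fin n)) (l : ℝ) (hl : 0 < l)
    (a : EuclideanSpace ℝ (Fin n) → EuclideanSpace ℂ (Fin m))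
    (ha : Integrable a)
    (hsupp : Function.support a ⊆ {y | ∀ i, |y i - c i| ≤ l / 2})
    (hmom : ∀ γ : Fin n → ℕ, (∑ i, γ i) ≤ s → (∫ y, (∏ i, y i ^ γ i) • a y) = 0)
    (x : EuclideanSpace ℝ (Fin n)) (hx : 2 * Real.sqrt n * l ≤ ‖x - c‖) :
    ‖∫ y, K x y • a y‖ ≤
      (C₀ * 2 ^ ((n : ℝ) + s + δ) * (Real.sqrt n + 1) ^ ((s : ℝ) + δ)) *
        (l / ‖x - c‖) ^ ((n : ℝ) + s + δ) * (l ^ n)⁻¹ *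
        ∫ y in {y | ∀ i, |y i - c i| ≤ l / 2}, ‖a y‖ := by
  classical
  have hp0 : (0:ℝ) < (n : ℝ) + s + δ := by positivity
  have hsqn : (1:ℝ) ≤ Real.sqrt n := by
    have h1 : (1:ℝ) ≤ (n:ℝ) := by exact_mod_cast hn
    calc (1:ℝ) = Real.sqrt 1 := Real.sqrt_one.symm
      _ ≤ Real.sqrt n := Real.sqrt_le_sqrt h1
  have hsl : 0 < Real.sqrt n * l := mul_pos (lt_of_lt_of_le one_pos hsqn) hl
  have hd0 : 0 < ‖x - c‖ := lt_of_lt_of_le (by nlinarith) hx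
  have hsld : Real.sqrt n * l ≤ ‖x - c‖ / 2 := by nlinarith
  have hQmeas : MeasurableSet {y : EuclideanSpace ℝ (Fin n) | ∀ i, |y i - c i| ≤ l / 2} :=
    stmt18_isClosed.measurableSet
  have hQnorm : ∀ y ∈ {y : EuclideanSpace ℝ (Fin n) | ∀ i, |y i - c i| ≤ l / 2},
      ‖y - c‖ ≤ Real.sqrt n * (l / 2) := fun y hy => stmt18_norm_sub_le hl.le y hy
  have hfar : ∀ z : EuclideanSpace ℝ (Fin n), ‖z - c‖ ≤ Real.sqrt n * (l / 2) →
      ‖x - c‖ / 2 ≤ ‖x - z‖ ∧ x ≠ z ∧ 2 * ‖z - c‖ ≤ ‖x - z‖ := by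
    intro z hz
    have htri : ‖x - c‖ ≤ ‖x - z‖ + ‖z - c‖ := by
      calc ‖x - c‖ = ‖(x - z) + (z - c)‖ := by rw [sub_add_sub_cancel]
        _ ≤ ‖x - z‖ + ‖z - c‖ := norm_add_le _ _
    have hdz : ‖x - c‖ / 2 ≤ ‖x - z‖ := by nlinarith
    refine ⟨hdz, ?_, by nlinarith [norm_nonneg (z - c)]⟩
    intro hxz
    have hd0' := hd0
    rw [hxz] at hd0'
    rw [hxz, sub_self, norm_zero] at hdz
    linarith
  have hWopen : IsOpen {y : EuclideanSpace ℝ (Fin n) | y ≠ x} := isOpen_ne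
  have hQW : {y : EuclideanSpace ℝ (Fin n) | ∀ i, |y i - c i| ≤ l / 2}
      ⊆ {y : EuclideanSpace ℝ (Fin n) | y ≠ x} := by
    intro y hy
    exact Ne.symm (hfar y (hQnorm y hy)).2.1
  set P : EuclideanSpace ℝ (Fin n) → ℂ := fun y => ∑ k ∈ Finset.range (s+1),
      ((1:ℝ) / k.factorial) • (iteratedFDeriv ℝ k (K x) c fun _ => y - c) with hPdef
  have hPcont : Continuous P := by
    apply continuous_finset_sum
    intro k _
    exact (((iteratedFDeriv ℝ k (K x) c).cont.comp
      (continuous_pi fun _ => continuous_id.sub continuous_const)).const_smul ((1:ℝ) / k.factorial))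
  -- remainder bound
  have hrem : ∀ y ∈ {y : EuclideanSpace ℝ (Fin n) | ∀ i, |y i - c i| ≤ l / 2},
      ‖K x y - P y‖ ≤
        C₀ * 2 ^ ((n : ℝ) + s + δ) * (Real.sqrt n * l) ^ ((s : ℝ) + δ)
          / ‖x - c‖ ^ ((n : ℝ) + s + δ) := by
    intro y hy
    set v := y - c with hv
    have hvn : ‖v‖ ≤ Real.sqrt n * (l / 2) := hQnorm y hy
    have hγseg : ∀ t ∈ Icc (0:ℝ) 1, ‖(c + t • v) - c‖ ≤ Real.sqrt n * (l / 2) := by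
      intro t ht
      have h1 : (c + t • v) - c = t • v := by abel
      rw [h1, norm_smul, Real.norm_eq_abs, abs_of_nonneg ht.1]
      calc t * ‖v‖ ≤ 1 * ‖v‖ := mul_le_mul_of_nonneg_right ht.2 (norm_nonneg v)
        _ ≤ Real.sqrt n * (l / 2) := by rw [one_mul]; exact hvn
    have hIccU : Icc (0:ℝ) 1 ⊆ (fun t : ℝ => c + t • v) ⁻¹' {y | y ≠ x} := by
      intro t ht
      exact Ne.symm (hfar _ (hγseg t ht)).2.1
    have hUopen : IsOpen ((fun t : ℝ => c + t • v) ⁻¹' {y : EuclideanSpace ℝ (Fin n) | y ≠ x}) :=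
      hWopen.preimage (by fun_prop)
    have hgC : ContDiffOn ℝ s (fun t : ℝ => K x (c + t • v))
        ((fun t : ℝ => c + t • v) ⁻¹' {y | y ≠ x}) := by
      apply ContDiffOn.comp (hK x)
        ((contDiff_const.add (contDiff_id.smul contDiff_const)).contDiffOn)
      exact fun t ht => ht
    have hchain := stmt18_chain hWopen (hK x) c v
    have hγ0 : c + (0:ℝ) • v = c := by rw [zero_smul, add_zero]
    have h0W : (c + (0:ℝ) • v) ∈ {y : EuclideanSpace ℝ (Fin n) | y ≠ x} :=
      hIccU ⟨le_refl _, zero_le_one⟩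
    -- Hölder bound on the s-th derivative along the segment
    have hBbound : ∀ ξ ∈ Icc (0:ℝ) 1,
        ‖iteratedDerivWithin s (fun t : ℝ => K x (c + t • v))
            ((fun t : ℝ => c + t • v) ⁻¹' {y | y ≠ x}) ξ
          - iteratedDerivWithin s (fun t : ℝ => K x (c + t • v))
            ((fun t : ℝ => c + t • v) ⁻¹' {y | y ≠ x}) 0‖
          ≤ C₀ * ‖v‖ ^ δ / (‖x - c‖ / 2) ^ ((n : ℝ) + s + δ) * ‖v‖ ^ s := by
      intro ξ hξ
      rw [hchain s le_rfl ξ (hIccU hξ), hchain s le_rfl 0 h0W, hγ0]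
      have hfz := hfar (c + ξ • v) (hγseg ξ hξ)
      have hξc : (c + ξ • v) - c = ξ • v := by abel
      have hstep1 : ‖iteratedFDeriv ℝ s (K x) (c + ξ • v) (fun _ => v)
          - iteratedFDeriv ℝ s (K x) c (fun _ => v)‖
          ≤ ‖iteratedFDeriv ℝ s (K x) (c + ξ • v) - iteratedFDeriv ℝ s (K x) c‖ * ‖v‖ ^ s := by
        rw [← ContinuousMultilinearMap.sub_apply]
        calc ‖(iteratedFDeriv ℝ s (K x) (c + ξ • v) - iteratedFDeriv ℝ s (K x) c) fun _ => v‖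
            ≤ ‖iteratedFDeriv ℝ s (K x) (c + ξ • v) - iteratedFDeriv ℝ s (K x) c‖
              * ∏ _j : Fin s, ‖v‖ :=
              (iteratedFDeriv ℝ s (K x) (c + ξ • v) - iteratedFDeriv ℝ s (K x) c).le_opNorm _
          _ = _ := by rw [Finset.prod_const, Finset.card_univ, Fintype.card_fin]
      have hstep2 : ‖iteratedFDeriv ℝ s (K x) (c + ξ • v) - iteratedFDeriv ℝ s (K x) c‖
          ≤ C₀ * ‖(c + ξ • v) - c‖ ^ δ / ‖x - (c + ξ • v)‖ ^ ((n : ℝ) + s + δ) :=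
        hholder x (c + ξ • v) c hfz.2.1 hfz.2.2
      have hstep3 : C₀ * ‖(c + ξ • v) - c‖ ^ δ / ‖x - (c + ξ • v)‖ ^ ((n : ℝ) + s + δ)
          ≤ C₀ * ‖v‖ ^ δ / (‖x - c‖ / 2) ^ ((n : ℝ) + s + δ) := by
        have hnum : ‖(c + ξ • v) - c‖ ≤ ‖v‖ := by
          rw [hξc, norm_smul, Real.norm_eq_abs, abs_of_nonneg hξ.1]
          calc ξ * ‖v‖ ≤ 1 * ‖v‖ := mul_le_mul_of_nonneg_right hξ.2 (norm_nonneg v)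
            _ = ‖v‖ := one_mul _
        have hden : (‖x - c‖ / 2) ^ ((n : ℝ) + s + δ)
            ≤ ‖x - (c + ξ • v)‖ ^ ((n : ℝ) + s + δ) :=
          Real.rpow_le_rpow (by positivity) hfz.1 hp0.le
        apply div_le_div₀ (by positivity)
          (mul_le_mul_of_nonneg_left (Real.rpow_le_rpow (norm_nonneg _) hnum hδ0.le) hC₀.le)
          (by positivity) hden
      calc ‖iteratedFDeriv ℝ s (K x) (c + ξ • v) (fun _ => v)
            - iteratedFDeriv ℝ s (K x) c (fun _ => v)‖
          ≤ (C₀ * ‖(c + ξ • v) - c‖ ^ δ / ‖x - (c + ξ • v)‖ ^ ((n : ℝ) + s + δ)) * ‖v‖ ^ s :=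
            le_trans hstep1 (mul_le_mul_of_nonneg_right hstep2 (by positivity))
        _ ≤ C₀ * ‖v‖ ^ δ / (‖x - c‖ / 2) ^ ((n : ℝ) + s + δ) * ‖v‖ ^ s :=
            mul_le_mul_of_nonneg_right hstep3 (by positivity)
    have htay := stmt18_taylor_rem s (fun t : ℝ => K x (c + t • v))
      ((fun t : ℝ => c + t • v) ⁻¹' {y | y ≠ x}) hUopen hIccU hgC
      (C₀ * ‖v‖ ^ δ / (‖x - c‖ / 2) ^ ((n : ℝ) + s + δ) * ‖v‖ ^ s) hBbound 1
      ⟨zero_le_one, le_refl _⟩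
    have hId : ∀ k ∈ Finset.range (s+1),
        ((1:ℝ) ^ k / k.factorial) • iteratedDerivWithin k (fun t : ℝ => K x (c + t • v))
          ((fun t : ℝ => c + t • v) ⁻¹' {y | y ≠ x}) 0
        = ((1:ℝ) / k.factorial) • (iteratedFDeriv ℝ k (K x) c fun _ => y - c) := by
      intro k hk
      rw [hchain k (Nat.lt_succ_iff.mp (Finset.mem_range.mp hk)) 0 h0W, hγ0, one_pow]
    rw [Finset.sum_congr rfl hId] at htay
    have hg1 : c + (1:ℝ) • v = y := by rw [one_smul, hv]; abel
    have htay2 : ‖K x y - P y‖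
        ≤ C₀ * ‖v‖ ^ δ / (‖x - c‖ / 2) ^ ((n : ℝ) + s + δ) * ‖v‖ ^ s := by
      simp only [hg1] at htay
      exact htay
    -- now compare the two bounds
    refine le_trans htay2 ?_
    have h2 : (‖x - c‖ / 2) ^ ((n : ℝ) + s + δ)
        = ‖x - c‖ ^ ((n : ℝ) + s + δ) / 2 ^ ((n : ℝ) + s + δ) :=
      Real.div_rpow hd0.le (by norm_num : (0:ℝ) ≤ 2) _
    have hne1 : (‖x - c‖ : ℝ) ^ ((n : ℝ) + s + δ) ≠ 0 := by positivity
    have hne2 : (2 : ℝ) ^ ((n : ℝ) + s + δ) ≠ 0 := by positivity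
    have hkey : C₀ * ‖v‖ ^ δ / (‖x - c‖ / 2) ^ ((n : ℝ) + s + δ) * ‖v‖ ^ s
        = C₀ * 2 ^ ((n : ℝ) + s + δ) * (‖v‖ ^ δ * ‖v‖ ^ s) / ‖x - c‖ ^ ((n : ℝ) + s + δ) := by
      rw [h2]
      field_simp
    rw [hkey]
    have hsplit : (Real.sqrt n * l) ^ ((s : ℝ) + δ)
        = (Real.sqrt n * l) ^ δ * (Real.sqrt n * l) ^ (s : ℕ) := by
      rw [← Real.rpow_natCast (Real.sqrt n * l) s, ← Real.rpow_add hsl, add_comm]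
    rw [hsplit]
    have hvsl : ‖v‖ ≤ Real.sqrt n * l := le_trans hvn (by nlinarith)
    apply div_le_div₀ (by positivity) ?_ (by positivity) (le_refl _)
    have hmul : ‖v‖ ^ δ * ‖v‖ ^ s ≤ (Real.sqrt n * l) ^ δ * (Real.sqrt n * l) ^ (s : ℕ) :=
      mul_le_mul (Real.rpow_le_rpow (norm_nonneg _) hvsl hδ0.le)
        (pow_le_pow_left₀ (norm_nonneg _) hvsl s) (by positivity) (by positivity)
    exact mul_le_mul_of_nonneg_left hmul (by positivity)
  -- integral part
  set Q := {y : EuclideanSpace ℝ (Fin n) | ∀ i, |y i - c i| ≤ l / 2} with hQdef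
  have hsupp0 : ∀ y, y ∉ Q → a y = 0 := by
    intro y hy
    by_contra h
    exact hy (hsupp (Function.mem_support.mpr h))
  have hKmeas : AEStronglyMeasurable (K x) (volume.restrict Q) :=
    (((hK x).continuousOn).mono hQW).aestronglyMeasurable hQmeas
  have hKbound : ∀ y ∈ Q, ‖K x y‖ ≤ C₀ * (‖x - c‖ / 2) ^ (-((n:ℝ) + 0)) := by
    intro y hy
    have hf := hfar y (hQnorm y hy)
    have h1 := hsize x y hf.2.1 0 (Nat.zero_le s)
    rw [norm_iteratedFDeriv_zero] at h1
    push_cast at h1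
    refine le_trans h1 (mul_le_mul_of_nonneg_left ?_ hC₀.le)
    exact Real.rpow_le_rpow_of_nonpos (by positivity) hf.1
      (by rw [neg_nonpos]; positivity)
  have hKa : IntegrableOn (fun y => K x y • a y) Q := by
    apply Integrable.mono'
      ((ha.norm.const_mul (C₀ * (‖x - c‖ / 2) ^ (-((n:ℝ) + 0)))).restrict)
    · exact hKmeas.smul ha.1.restrict
    · rw [ae_restrict_iff' hQmeas]
      filter_upwards with y hy
      calc ‖K x y • a y‖ = ‖K x y‖ * ‖a y‖ := norm_smul _ _
        _ ≤ _ := mul_le_mul_of_nonneg_right (hKbound y hy) (norm_nonneg _)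
  have hPa : Integrable (fun y => P y • a y) :=
    stmt18_integrable_smul hl.le ha hsupp P hPcont
  have hPa0 : (∫ y, P y • a y) = 0 := stmt18_mom_taylor hl.le ha hsupp hmom
    (fun k => iteratedFDeriv ℝ k (K x) c)
  have heq1 : (∫ y, K x y • a y) = ∫ y in Q, K x y • a y :=
    (setIntegral_eq_integral_of_forall_compl_eq_zero
      (fun y hy => by rw [hsupp0 y hy, smul_zero])).symm
  have heq2 : (∫ y in Q, P y • a y) = 0 := by
    rw [setIntegral_eq_integral_of_forall_compl_eq_zero
      (fun y hy => by rw [hsupp0 y hy, smul_zero])]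
    exact hPa0
  have heq3 : (∫ y in Q, K x y • a y) = ∫ y in Q, (K x y - P y) • a y := by
    have hsub : (∫ y in Q, (K x y - P y) • a y)
        = (∫ y in Q, K x y • a y) - ∫ y in Q, P y • a y := by
      rw [← integral_sub hKa hPa.integrableOn]
      congr 1; funext y; rw [sub_smul]
    rw [hsub, heq2, sub_zero]
  rw [heq1, heq3]
  have hint_nonneg : (0:ℝ) ≤ ∫ y in Q, ‖a y‖ := integral_nonneg fun y => norm_nonneg _
  have hcoef : C₀ * 2 ^ ((n : ℝ) + s + δ) * (Real.sqrt n * l) ^ ((s : ℝ) + δ)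
        / ‖x - c‖ ^ ((n : ℝ) + s + δ)
      ≤ (C₀ * 2 ^ ((n : ℝ) + s + δ) * (Real.sqrt n + 1) ^ ((s : ℝ) + δ)) *
        (l / ‖x - c‖) ^ ((n : ℝ) + s + δ) * (l ^ n)⁻¹ := by
    have hlp : l ^ ((n:ℝ) + s + δ) = l ^ (n:ℕ) * l ^ ((s:ℝ) + δ) := by
      rw [show (n:ℝ) + s + δ = (n:ℝ) + ((s:ℝ) + δ) by ring, Real.rpow_add hl,
        Real.rpow_natCast]
    have hln : (l:ℝ) ^ (n:ℕ) ≠ 0 := by positivity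
    have hrhs : (C₀ * 2 ^ ((n : ℝ) + s + δ) * (Real.sqrt n + 1) ^ ((s : ℝ) + δ)) *
        (l / ‖x - c‖) ^ ((n : ℝ) + s + δ) * (l ^ n)⁻¹
        = C₀ * 2 ^ ((n : ℝ) + s + δ) *
          ((Real.sqrt n + 1) ^ ((s : ℝ) + δ) * l ^ ((s:ℝ) + δ))
          / ‖x - c‖ ^ ((n : ℝ) + s + δ) := by
      rw [Real.div_rpow hl.le hd0.le, hlp]
      field_simp
    rw [hrhs]
    apply div_le_div₀ (by positivity) ?_ (by positivity) le_rfl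
    rw [Real.mul_rpow (Real.sqrt_nonneg _) hl.le]
    apply mul_le_mul_of_nonneg_left ?_ (by positivity)
    apply mul_le_mul_of_nonneg_right ?_ (by positivity)
    exact Real.rpow_le_rpow (Real.sqrt_nonneg _) (by linarith) (by positivity)
  calc ‖∫ y in Q, (K x y - P y) • a y‖
      ≤ ∫ y in Q, ‖(K x y - P y) • a y‖ := norm_integral_le_integral_norm _
    _ ≤ ∫ y in Q, (C₀ * 2 ^ ((n : ℝ) + s + δ) * (Real.sqrt n * l) ^ ((s : ℝ) + δ)
          / ‖x - c‖ ^ ((n : ℝ) + s + δ)) * ‖a y‖ := by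
        apply setIntegral_mono_on
        · have h2 : IntegrableOn (fun y => (K x y - P y) • a y) Q := by
            apply (hKa.sub hPa.integrableOn).congr
            filter_upwards with y
            rw [Pi.sub_apply, sub_smul]
          exact h2.norm
        · exact (ha.norm.const_mul _).integrableOn
        · exact hQmeas
        · intro y hy
          rw [norm_smul]
          exact mul_le_mul_of_nonneg_right (hrem y hy) (norm_nonneg _)
    _ = (C₀ * 2 ^ ((n : ℝ) + s + δ) * (Real.sqrt n * l) ^ ((s : ℝ) + δ)
          / ‖x - c‖ ^ ((n : ℝ) + s + δ)) * ∫ y in Q, ‖a y‖ := by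
        simp_rw [← smul_eq_mul]
        rw [integral_smul]
    _ ≤ (C₀ * 2 ^ ((n : ℝ) + s + δ) * (Real.sqrt n + 1) ^ ((s : ℝ) + δ)) *
        (l / ‖x - c‖) ^ ((n : ℝ) + s + δ) * (l ^ n)⁻¹ * ∫ y in Q, ‖a y‖ :=
        mul_le_mul_of_nonneg_right hcoef hint_nonneg



set_option maxHeartbeats 800000 in
/-- Let `K` be an `(s, δ)`-type standard kernel (with constant
`C₀`), `Q` a cube with center `c` and edge length `l`, and `a : ℝ^n → ℂ^m` integrable,
supported in `Q`, with vanishing moments up to order `s`. Then there is a constant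
`C > 0` depending only on `C₀`, `n`, `s` (and `δ`) such that for every `x` with
`|x − c| ≥ 2√n l`,
`‖∫ K(x,y) a(y) dy‖ ≤ C (l/|x−c|)^{n+s+δ} l^{−n} ∫_Q ‖a‖`. -/
theorem stmt18 (n m s : ℕ) (δ : ℝ) (hδ0 : 0 < δ) (hδ1 : δ ≤ 1)
    (C₀ : ℝ) (hC₀ : 0 < C₀) :
    ∃ C : ℝ, 0 < C ∧
    ∀ K : EuclideanSpace ℝ (Fin n) → EuclideanSpace ℝ (Fin n) → ℂ,
      (∀ x, ContDiffOn ℝ (s : ℕ∞) (K x) {y | y ≠ x}) →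
      (∀ x y, x ≠ y → ∀ k ≤ s,
        ‖iteratedFDeriv ℝ k (K x) y‖ ≤ C₀ * ‖x - y‖ ^ (-(n + k : ℝ))) →
      (∀ x y z, x ≠ y → 2 * ‖y - z‖ ≤ ‖x - y‖ →
        ‖iteratedFDeriv ℝ s (K x) y - iteratedFDeriv ℝ s (K x) z‖
          ≤ C₀ * ‖y - z‖ ^ δ / ‖x - y‖ ^ ((n : ℝ) + s + δ)) →
    ∀ (c : EuclideanSpace ℝ (Fin n)) (l : ℝ), 0 < l →
    ∀ a : EuclideanSpace ℝ (Fin n) → EuclideanSpace ℂ (Fin m),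
      Integrable a →
      Function.support a ⊆ {y | ∀ i, |y i - c i| ≤ l / 2} →
      (∀ γ : Fin n → ℕ, (∑ i, γ i) ≤ s → (∫ y, (∏ i, y i ^ γ i) • a y) = 0) →
    ∀ x : EuclideanSpace ℝ (Fin n), 2 * Real.sqrt n * l ≤ ‖x - c‖ →
      ‖∫ y, K x y • a y‖ ≤
        C * (l / ‖x - c‖) ^ ((n : ℝ) + s + δ) * (l ^ n)⁻¹ *
          ∫ y in {y | ∀ i, |y i - c i| ≤ l / 2}, ‖a y‖ := by
  refine ⟨C₀ * 2 ^ ((n : ℝ) + s + δ) * (Real.sqrt n + 1) ^ ((s : ℝ) + δ),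
    by positivity, ?_⟩
  intro K hK hsize hholder c l hl a ha hsupp hmom x hx
  rcases Nat.eq_zero_or_pos n with hn | hn
  · subst hn
    haveI : Subsingleton (EuclideanSpace ℝ (Fin 0)) :=
      ⟨fun a b => PiLp.ext fun i => i.elim0⟩
    have hvol : (volume : Measure (EuclideanSpace ℝ (Fin 0))) Set.univ = 1 := by
      have h := (EuclideanSpace.volume_preserving_symm_measurableEquiv_toLp (Fin 0)).measure_preimage
        (MeasurableSet.univ (α := Fin 0 → ℝ)).nullMeasurableSet
      simpa [MeasureTheory.volume_pi, Measure.pi_univ] using h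
    have hconst : a = fun _ => a x := funext fun y => by rw [Subsingleton.elim y x]
    have h0 := hmom (fun _ => 0) (by simp)
    have hax : a x = 0 := by
      rw [hconst] at h0
      simpa [integral_const, measureReal_def, hvol] using h0
    have haz : ∀ y, a y = 0 := fun y => by rw [Subsingleton.elim y x, hax]
    have hLHS : (∫ y, K x y • a y) = 0 := by
      simp [haz]
    rw [hLHS, norm_zero]
    have hxc : x - c = 0 := Subsingleton.elim _ _
    rw [hxc, norm_zero, div_zero, Real.zero_rpow (by positivity), mul_zero, zero_mul,
      zero_mul]
  · exact stmt18_main hδ0 hδ1 hC₀ hn K hK hsize hholder c l hl a ha hsupp hmom x hx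
end
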